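/- arXiv:0911.4312 — 5 statements merged into one kernel-verified Lean document; each statement's English description precedes it below -/
import Mathlib

section
/- Let H be a finite-dimensional complex inner product space with orthonormal basis (e_1, \dots, e_n), and for a unit vector ψ define the entropy h(ψ) = −Σ_{j=1}^n |⟨ψ, e_j⟩|² · log |⟨ψ, e_j⟩|² (with the convention 0·log 0 = 0). Then for every unitary operator U on H and every unit vector ψ, one has h(Uψ) + h(ψ) ≥ −2 log c(U), where c(U) = max_{1 ≤ j,k ≤ n} |⟨e_k, U e_j⟩|. -/
open scoped InnerProductSpace

section EUPAux
open Finset Real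

lemma eup_aux_deriv (x : ℝ) (hx : 0 ≤ x) (ε : ℝ) :
    HasDerivAt (fun t : ℝ => x ^ (1 / (1 + ε * t))) (-(ε * (x * Real.log x))) 0 := by
  rcases eq_or_lt_of_le hx with h0 | h0
  · have hev : ∀ᶠ t in nhds (0:ℝ), 1 + ε * t ≠ 0 := by
      have hcont : Continuous fun t : ℝ => 1 + ε * t := by continuity
      have := hcont.continuousAt (x := 0)
      exact this.eventually_ne (by norm_num)
    have heq : (fun t : ℝ => x ^ (1 / (1 + ε * t))) =ᶠ[nhds (0:ℝ)] fun _ => (0:ℝ) := by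
      filter_upwards [hev] with t ht
      rw [← h0, Real.zero_rpow (one_div_ne_zero ht)]
    have : HasDerivAt (fun _ : ℝ => (0:ℝ)) 0 0 := hasDerivAt_const _ _
    have h2 := this.congr_of_eventuallyEq heq
    simpa [← h0] using h2
  · have hfeq : (fun t : ℝ => x ^ (1 / (1 + ε * t)))
        = fun t : ℝ => Real.exp (Real.log x * (1 + ε * t)⁻¹) := by
      funext t
      rw [Real.rpow_def_of_pos h0, one_div]
    rw [hfeq]
    have h1 : HasDerivAt (fun t : ℝ => 1 + ε * t) ε 0 := by
      simpa using ((hasDerivAt_id (0:ℝ)).const_mul ε).const_add 1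
    have h2 := h1.inv (by norm_num)
    have h3 := h2.const_mul (Real.log x)
    have h4 := h3.exp
    convert h4 using 1
    simp [Real.exp_log h0]
    change _ = rexp (log x * (1 + ε * 0)⁻¹) * (log x * (-ε / (1 + ε * 0) ^ 2))
    simp [Real.exp_log h0]
    ring

lemma eup_entropy_limit {n : ℕ} (p q : Fin n → ℝ) (hp : ∀ j, 0 ≤ p j) (hq : ∀ k, 0 ≤ q k)
    (hp1 : ∑ j, p j = 1) (hq1 : ∑ k, q k = 1) {c : ℝ} (hc : 0 < c)
    (key : ∀ t : ℝ, 0 < t → t < 1 →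
      (∑ k, (q k) ^ (1 / (1 - t))) ^ ((1 - t) / 2)
        ≤ c ^ t * (∑ j, (p j) ^ (1 / (1 + t))) ^ ((1 + t) / 2)) :
    (-∑ k, q k * Real.log (q k)) + (-∑ j, p j * Real.log (p j)) ≥ -2 * Real.log c := by
  classical
  obtain ⟨j0, hj0⟩ : ∃ j, p j ≠ 0 := by
    by_contra h; push_neg at h
    rw [Finset.sum_eq_zero (fun j _ => h j)] at hp1; exact one_ne_zero hp1.symm
  obtain ⟨k0, hk0⟩ : ∃ k, q k ≠ 0 := by
    by_contra h; push_neg at h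
    rw [Finset.sum_eq_zero (fun k _ => h k)] at hq1; exact one_ne_zero hq1.symm
  have hpj0 : 0 < p j0 := lt_of_le_of_ne (hp j0) (Ne.symm hj0)
  have hqk0 : 0 < q k0 := lt_of_le_of_ne (hq k0) (Ne.symm hk0)
  set P : ℝ → ℝ := fun t => ∑ j, (p j) ^ (1 / (1 + t)) with hPdef
  set Q : ℝ → ℝ := fun t => ∑ k, (q k) ^ (1 / (1 - t)) with hQdef
  have hPpos : ∀ t, 0 < P t := fun t =>
    lt_of_lt_of_le (Real.rpow_pos_of_pos hpj0 _)
      (Finset.single_le_sum (fun j _ => Real.rpow_nonneg (hp j) _) (mem_univ j0))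
  have hQpos : ∀ t, 0 < Q t := fun t =>
    lt_of_lt_of_le (Real.rpow_pos_of_pos hqk0 _)
      (Finset.single_le_sum (fun k _ => Real.rpow_nonneg (hq k) _) (mem_univ k0))
  set G : ℝ → ℝ := fun t =>
    t * Real.log c + (1 + t) / 2 * Real.log (P t) - (1 - t) / 2 * Real.log (Q t) with hGdef
  have hP0 : P 0 = 1 := by simp [hPdef, hp1]
  have hQ0 : Q 0 = 1 := by simp [hQdef, hq1]
  have hG0 : G 0 = 0 := by simp [hGdef, hP0, hQ0]
  have hGt : ∀ t, 0 < t → t < 1 → 0 ≤ G t := by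
    intro t ht0 ht1
    have h := key t ht0 ht1
    have hlog := Real.log_le_log (Real.rpow_pos_of_pos (hQpos t) _) h
    rw [Real.log_rpow (hQpos t),
      Real.log_mul (ne_of_gt (Real.rpow_pos_of_pos hc t))
        (ne_of_gt (Real.rpow_pos_of_pos (hPpos t) _)),
      Real.log_rpow hc, Real.log_rpow (hPpos t)] at hlog
    rw [hGdef]; dsimp only; linarith
  have hPder : HasDerivAt P (∑ j, -(p j * Real.log (p j))) 0 := by
    apply HasDerivAt.fun_sum
    intro j _
    simpa using eup_aux_deriv (p j) (hp j) 1
  have hQder : HasDerivAt Q (∑ k, q k * Real.log (q k)) 0 := by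
    apply HasDerivAt.fun_sum
    intro k _
    have := eup_aux_deriv (q k) (hq k) (-1)
    simp only [neg_mul, one_mul, neg_neg, ← sub_eq_add_neg] at this
    exact this
  -- derivative of G at 0
  set D : ℝ := Real.log c + (1/2) * (∑ j, -(p j * Real.log (p j)))
      - (1/2) * (∑ k, q k * Real.log (q k)) with hDdef
  have hGder : HasDerivAt G D 0 := by
    have h1 : HasDerivAt (fun t : ℝ => t * Real.log c) (Real.log c) 0 := by
      simpa using (hasDerivAt_id (0:ℝ)).mul_const (Real.log c)
    have ha : HasDerivAt (fun t : ℝ => (1 + t) / 2) (1/2 : ℝ) 0 := by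
      simpa using (((hasDerivAt_id (0:ℝ)).const_add 1).div_const 2)
    have hb : HasDerivAt (fun t : ℝ => Real.log (P t)) ((∑ j, -(p j * Real.log (p j))) / P 0) 0 :=
      hPder.log (ne_of_gt (hPpos 0))
    have h2 := ha.mul hb
    have ha' : HasDerivAt (fun t : ℝ => (1 - t) / 2) (-(1/2) : ℝ) 0 := by
      have := (((hasDerivAt_id (0:ℝ)).const_mul (-1)).const_add 1).div_const 2
      simp only [neg_mul, one_mul, ← sub_eq_add_neg] at this
      exact this.congr_deriv (by norm_num)
    have hb' : HasDerivAt (fun t : ℝ => Real.log (Q t)) ((∑ k, q k * Real.log (q k)) / Q 0) 0 :=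
      hQder.log (ne_of_gt (hQpos 0))
    have h3 := ha'.mul hb'
    have h4 := (h1.add h2).sub h3
    refine h4.congr_deriv ?_
    rw [hDdef, hP0, hQ0]
    simp [Real.log_one]
  -- slope argument
  have hslope : Filter.Tendsto (fun t => G t / t) (nhdsWithin 0 (Set.Ioi 0)) (nhds D) := by
    have h := hasDerivAt_iff_tendsto_slope.mp hGder
    have hmono : nhdsWithin (0:ℝ) (Set.Ioi 0) ≤ nhdsWithin 0 {(0:ℝ)}ᶜ :=
      nhdsWithin_mono 0 (fun x hx => ne_of_gt hx)
    have h2 := h.mono_left hmono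
    refine h2.congr' ?_
    filter_upwards with t
    simp [slope_def_field, hG0]
  have hD : 0 ≤ D := by
    refine ge_of_tendsto hslope ?_
    filter_upwards [Ioo_mem_nhdsGT_of_mem (Set.left_mem_Ico.mpr one_pos)] with t ht
    exact div_nonneg (hGt t ht.1 ht.2) ht.1.le
  have e1 : ∑ j, -(p j * Real.log (p j)) = -∑ j, p j * Real.log (p j) := by
    rw [← Finset.sum_neg_distrib]
  rw [hDdef] at hD
  rw [e1] at hD
  linarith

end EUPAux

section EUPRiesz
open Finset Real Complex

lemma eup_riesz_step {n : ℕ} (M : Matrix (Fin n) (Fin n) ℂ) (a g : Fin n → ℂ)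
    (hg : ∀ k, g k = ∑ j, M k j * a j)
    (hM2 : ∀ v : Fin n → ℂ, ∑ k, ‖∑ j, M k j * v j‖ ^ (2:ℕ) ≤ ∑ j, ‖v j‖ ^ (2:ℕ))
    {c : ℝ} (hc0 : 0 ≤ c) (hc : ∀ k j, ‖M k j‖ ≤ c)
    {t : ℝ} (ht0 : 0 < t) (ht1 : t < 1) :
    (∑ k, ‖g k‖ ^ (2 / (1 - t))) ^ ((1 - t) / 2)
      ≤ c ^ t * (∑ j, ‖a j‖ ^ (2 / (1 + t))) ^ ((1 + t) / 2) := by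
  classical
  have h1t : (0:ℝ) < 1 - t := by linarith
  have h1t' : (0:ℝ) < 1 + t := by linarith
  set P := ∑ j, ‖a j‖ ^ (2 / (1 + t)) with hPdef
  set Q := ∑ k, ‖g k‖ ^ (2 / (1 - t)) with hQdef
  have hPnn : 0 ≤ P := Finset.sum_nonneg fun j _ => Real.rpow_nonneg (norm_nonneg _) _
  have hQnn : 0 ≤ Q := Finset.sum_nonneg fun k _ => Real.rpow_nonneg (norm_nonneg _) _
  rcases eq_or_lt_of_le hQnn with hQ0 | hQpos
  · rw [← hQ0, Real.zero_rpow (by positivity)]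
    positivity
  have hPpos : 0 < P := by
    obtain ⟨j0, hj0⟩ : ∃ j, a j ≠ 0 := by
      by_contra h
      push_neg at h
      have : Q = 0 := by
        rw [hQdef]
        apply Finset.sum_eq_zero
        intro k _
        rw [hg k, Finset.sum_eq_zero (fun j _ => by rw [h j, mul_zero])]
        simp only [norm_zero]
        exact Real.zero_rpow (by positivity)
      linarith
    refine lt_of_lt_of_le (Real.rpow_pos_of_pos (norm_pos_iff.mpr hj0) (2/(1+t))) ?_
    exact Finset.single_le_sum (fun j _ => Real.rpow_nonneg (norm_nonneg _) _) (mem_univ j0)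
  -- the analytic family
  set α : Fin n → ℝ := fun j => Real.log ‖a j‖ / (1 + t) with hαdef
  set β : Fin n → ℝ := fun k => Real.log ‖g k‖ / (1 - t) with hβdef
  set A : Fin n → ℂ → ℂ := fun j z =>
    (if a j = 0 then 0 else a j / ‖a j‖) * Complex.exp ((α j : ℂ) * (1 + z)) with hAdef
  set B : Fin n → ℂ → ℂ := fun k z =>
    (if g k = 0 then 0 else (starRingEnd ℂ) (g k) / ‖g k‖) * Complex.exp ((β k : ℂ) * (1 + z))
    with hBdef
  set F : ℂ → ℂ := fun z => ∑ k, B k z * ∑ j, M k j * A j z with hFdef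
  -- norms of A and B
  have normA : ∀ (j) (z : ℂ), 0 ≤ z.re → ‖A j z‖ = ‖a j‖ ^ ((1 + z.re) / (1 + t)) := by
    intro j z hz
    by_cases h : a j = 0
    · simp only [hAdef, h, if_pos, norm_zero, zero_mul, norm_zero]
      exact (Real.zero_rpow (by positivity)).symm
    · have h0 : (0:ℝ) < ‖a j‖ := norm_pos_iff.mpr h
      simp only [hAdef, if_neg h, norm_mul, norm_div, Complex.norm_real, norm_norm,
        Complex.norm_exp]
      rw [div_self (ne_of_gt h0), one_mul, Complex.re_ofReal_mul,
        Real.rpow_def_of_pos h0]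
      congr 1
      simp only [hαdef, Complex.add_re, Complex.one_re]
      ring
  have normB : ∀ (k) (z : ℂ), 0 ≤ z.re → ‖B k z‖ = ‖g k‖ ^ ((1 + z.re) / (1 - t)) := by
    intro k z hz
    by_cases h : g k = 0
    · simp only [hBdef, h, if_pos, norm_zero, zero_mul, norm_zero]
      exact (Real.zero_rpow (by positivity)).symm
    · have h0 : (0:ℝ) < ‖g k‖ := norm_pos_iff.mpr h
      simp only [hBdef, if_neg h, norm_mul, norm_div, Complex.norm_real, norm_norm,
        RCLike.norm_conj, Complex.norm_exp]
      rw [div_self (ne_of_gt h0), one_mul, Complex.re_ofReal_mul,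
        Real.rpow_def_of_pos h0]
      congr 1
      simp only [hβdef, Complex.add_re, Complex.one_re]
      ring
  have sq_rpow : ∀ (x e : ℝ), 0 ≤ x → (x ^ e) ^ (2:ℕ) = x ^ (2*e) := by
    intro x e hx
    rw [← Real.rpow_natCast (x ^ e) 2, ← Real.rpow_mul hx]
    norm_num
    rw [mul_comm]
  -- edge bounds
  have edge0 : ∀ z ∈ Complex.re ⁻¹' {(0:ℝ)}, ‖F z‖ ≤ Real.sqrt P * Real.sqrt Q := by
    intro z hz
    have hz0 : z.re = 0 := hz
    set w : Fin n → ℂ := fun k => ∑ j, M k j * A j z with hwdef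
    have h1 : ‖F z‖ ≤ ∑ k, ‖B k z‖ * ‖w k‖ := by
      refine (norm_sum_le _ _).trans ?_
      apply le_of_eq
      exact Finset.sum_congr rfl fun k _ => norm_mul _ _
    have hBsum : ∑ k, ‖B k z‖ ^ (2:ℕ) = Q := by
      rw [hQdef]
      refine Finset.sum_congr rfl fun k _ => ?_
      rw [normB k z (by rw [hz0]), sq_rpow _ _ (norm_nonneg _), hz0]
      congr 1
      ring
    have hAsum : ∑ j, ‖A j z‖ ^ (2:ℕ) = P := by
      rw [hPdef]
      refine Finset.sum_congr rfl fun j _ => ?_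
      rw [normA j z (by rw [hz0]), sq_rpow _ _ (norm_nonneg _), hz0]
      congr 1
      ring
    have hwsum : ∑ k, ‖w k‖ ^ (2:ℕ) ≤ P := by
      rw [← hAsum]; exact hM2 (fun j => A j z)
    have h2 : (∑ k, ‖B k z‖ * ‖w k‖) ^ (2:ℕ) ≤ (∑ k, ‖B k z‖ ^ (2:ℕ)) * (∑ k, ‖w k‖ ^ (2:ℕ)) :=
      Finset.sum_mul_sq_le_sq_mul_sq _ _ _
    have h3 : ∑ k, ‖B k z‖ * ‖w k‖ ≤ Real.sqrt (Q * P) := by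
      have hnn : 0 ≤ ∑ k, ‖B k z‖ * ‖w k‖ :=
        Finset.sum_nonneg fun k _ => mul_nonneg (norm_nonneg _) (norm_nonneg _)
      rw [← Real.sqrt_sq hnn]
      apply Real.sqrt_le_sqrt
      calc (∑ k, ‖B k z‖ * ‖w k‖) ^ (2:ℕ)
          ≤ (∑ k, ‖B k z‖ ^ (2:ℕ)) * (∑ k, ‖w k‖ ^ (2:ℕ)) := h2
        _ ≤ Q * P := by
            rw [hBsum]
            exact mul_le_mul_of_nonneg_left hwsum hQnn
    calc ‖F z‖ ≤ ∑ k, ‖B k z‖ * ‖w k‖ := h1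
      _ ≤ Real.sqrt (Q * P) := h3
      _ = Real.sqrt P * Real.sqrt Q := by rw [Real.sqrt_mul hQnn, mul_comm]
  have genbound : ∀ z : ℂ, ‖F z‖ ≤ ∑ k, ‖B k z‖ * ∑ j, ‖M k j‖ * ‖A j z‖ := by
    intro z
    refine (norm_sum_le _ _).trans (Finset.sum_le_sum fun k _ => ?_)
    rw [norm_mul]
    refine mul_le_mul_of_nonneg_left ?_ (norm_nonneg _)
    refine (norm_sum_le _ _).trans (le_of_eq ?_)
    exact Finset.sum_congr rfl fun j _ => norm_mul _ _
  have edge1 : ∀ z ∈ Complex.re ⁻¹' {(1:ℝ)}, ‖F z‖ ≤ c * P * Q := by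
    intro z hz
    have hz1 : z.re = 1 := hz
    have hAsum : ∑ j, ‖A j z‖ = P := by
      rw [hPdef]
      refine Finset.sum_congr rfl fun j _ => ?_
      rw [normA j z (by rw [hz1]; norm_num), hz1]
      congr 1; ring
    have hBsum : ∑ k, ‖B k z‖ = Q := by
      rw [hQdef]
      refine Finset.sum_congr rfl fun k _ => ?_
      rw [normB k z (by rw [hz1]; norm_num), hz1]
      congr 1; ring
    calc ‖F z‖ ≤ ∑ k, ‖B k z‖ * ∑ j, ‖M k j‖ * ‖A j z‖ := genbound z
      _ ≤ ∑ k, ‖B k z‖ * ∑ j, c * ‖A j z‖ := by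
          gcongr with k _ j _
          · exact hc k j
      _ = c * P * Q := by
          simp only [← Finset.mul_sum, hAsum]
          rw [← Finset.sum_mul]
          rw [hBsum]; ring
  have hbdd : BddAbove ((norm ∘ F) ''
      (Complex.HadamardThreeLines.verticalClosedStrip 0 1)) := by
    refine ⟨(∑ k, Real.exp (2*|β k|)) * (c * ∑ j, Real.exp (2*|α j|)), ?_⟩
    rintro x ⟨z, hz, rfl⟩
    have hz' : z.re ∈ Set.Icc (0:ℝ) 1 := hz
    have hAb : ∀ j, ‖A j z‖ ≤ Real.exp (2 * |α j|) := by
      intro j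
      rw [normA j z hz'.1]
      by_cases h : a j = 0
      · rw [h, norm_zero, Real.zero_rpow
            (ne_of_gt (div_pos (by linarith [hz'.1]) h1t'))]
        positivity
      · have h0 : (0:ℝ) < ‖a j‖ := norm_pos_iff.mpr h
        rw [Real.rpow_def_of_pos h0]
        apply Real.exp_le_exp.mpr
        have e : Real.log ‖a j‖ * ((1 + z.re)/(1+t)) = α j * (1 + z.re) := by
          rw [hαdef]; ring
        rw [e]
        have h1 := le_abs_self (α j)
        have h2 := abs_nonneg (α j)
        have h3 := neg_abs_le (α j)
        nlinarith [hz'.1, hz'.2]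
    have hBb : ∀ k, ‖B k z‖ ≤ Real.exp (2 * |β k|) := by
      intro k
      rw [normB k z hz'.1]
      by_cases h : g k = 0
      · rw [h, norm_zero, Real.zero_rpow
            (ne_of_gt (div_pos (by linarith [hz'.1]) h1t))]
        positivity
      · have h0 : (0:ℝ) < ‖g k‖ := norm_pos_iff.mpr h
        rw [Real.rpow_def_of_pos h0]
        apply Real.exp_le_exp.mpr
        have e : Real.log ‖g k‖ * ((1 + z.re)/(1-t)) = β k * (1 + z.re) := by
          rw [hβdef]; ring
        rw [e]
        have h1 := le_abs_self (β k)
        have h2 := abs_nonneg (β k)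
        have h3 := neg_abs_le (β k)
        nlinarith [hz'.1, hz'.2]
    calc ‖F z‖ ≤ ∑ k, ‖B k z‖ * ∑ j, ‖M k j‖ * ‖A j z‖ := genbound z
      _ ≤ ∑ k, Real.exp (2*|β k|) * ∑ j, c * Real.exp (2*|α j|) := by
          refine Finset.sum_le_sum fun k _ => mul_le_mul (hBb k)
            (Finset.sum_le_sum fun j _ =>
              mul_le_mul (hc k j) (hAb j) (norm_nonneg _) hc0)
            (Finset.sum_nonneg fun j _ => mul_nonneg (norm_nonneg _) (norm_nonneg _))
            (Real.exp_nonneg _)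
      _ = (∑ k, Real.exp (2*|β k|)) * (c * ∑ j, Real.exp (2*|α j|)) := by
          simp only [← Finset.mul_sum]
          rw [← Finset.sum_mul]
  have hdiff : Differentiable ℂ F := by
    rw [hFdef]
    apply Differentiable.fun_sum
    intro k _
    apply Differentiable.mul
    · rw [hBdef]
      apply Differentiable.mul (differentiable_const _)
      apply Differentiable.cexp
      apply Differentiable.const_mul
      exact (differentiable_const _).add differentiable_id
    · apply Differentiable.fun_sum
      intro j _
      apply Differentiable.mul (differentiable_const _)
      rw [hAdef]
      apply Differentiable.mul (differentiable_const _)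
      apply Differentiable.cexp
      apply Differentiable.const_mul
      exact (differentiable_const _).add differentiable_id
  have hAt : ∀ j, A j (t:ℂ) = a j := by
    intro j
    by_cases h : a j = 0
    · simp [hAdef, h]
    · have h0 : (0:ℝ) < ‖a j‖ := norm_pos_iff.mpr h
      rw [hAdef]
      simp only [if_neg h]
      have e1 : ((α j : ℂ) * (1 + (t:ℂ))) = ((α j * (1+t) : ℝ) : ℂ) := by push_cast; ring
      rw [e1, ← Complex.ofReal_exp]
      have e2 : Real.exp (α j * (1+t)) = ‖a j‖ := by
        rw [hαdef]
        dsimp only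
        rw [div_mul_cancel₀ _ (ne_of_gt h1t')]
        exact Real.exp_log h0
      rw [e2]
      exact div_mul_cancel₀ _ (Complex.ofReal_ne_zero.mpr (ne_of_gt h0))
  have hFt : F (t:ℂ) = (Q:ℂ) := by
    rw [hFdef, hQdef]
    push_cast
    refine Finset.sum_congr rfl fun k _ => ?_
    have hgk : ∑ j, M k j * A j (t:ℂ) = g k := by
      rw [hg k]
      exact Finset.sum_congr rfl fun j _ => by rw [hAt j]
    rw [hgk]
    by_cases h : g k = 0
    · rw [hBdef]
      simp only [h, if_pos, norm_zero]
      rw [Real.zero_rpow (by positivity)]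
      simp
    · have h0 : (0:ℝ) < ‖g k‖ := norm_pos_iff.mpr h
      rw [hBdef]
      simp only [if_neg h]
      have e1 : ((β k : ℂ) * (1 + (t:ℂ))) = ((β k * (1+t) : ℝ) : ℂ) := by push_cast; ring
      rw [e1, ← Complex.ofReal_exp]
      have e2 : Real.exp (β k * (1+t)) = ‖g k‖ ^ ((1+t)/(1-t)) := by
        rw [Real.rpow_def_of_pos h0, hβdef]
        congr 1
        ring
      rw [e2]
      have e3 : g k * (starRingEnd ℂ) (g k) = (((‖g k‖^(2:ℕ) : ℝ)) : ℂ) := by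
        rw [Complex.mul_conj, Complex.normSq_eq_norm_sq]
      have e5 : ‖g k‖ ^ ((1+t)/(1-t)) * ‖g k‖^(2:ℕ) / ‖g k‖ = ‖g k‖ ^ (2/(1-t)) := by
        rw [div_eq_mul_inv, ← Real.rpow_natCast ‖g k‖ 2, ← Real.rpow_neg_one ‖g k‖,
          ← Real.rpow_add h0, ← Real.rpow_add h0]
        congr 1
        push_cast
        field_simp
        ring
      calc (starRingEnd ℂ) (g k) / (‖g k‖:ℂ) * (((‖g k‖ ^ ((1+t)/(1-t)) : ℝ)):ℂ) * g k
          = (((‖g k‖ ^ ((1+t)/(1-t)) : ℝ)):ℂ) * (g k * (starRingEnd ℂ) (g k)) / (‖g k‖:ℂ) := by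
            ring
        _ = ((‖g k‖ ^ ((1+t)/(1-t)) * ‖g k‖^(2:ℕ) / ‖g k‖ : ℝ) : ℂ) := by
            rw [e3]; push_cast; ring
        _ = ((‖g k‖ ^ (2/(1-t)) : ℝ) : ℂ) := by rw [e5]
  have hcpos : 0 < c := by
    rcases eq_or_lt_of_le hc0 with h | h
    · exfalso
      have hM0 : ∀ k j, M k j = 0 := fun k j =>
        norm_eq_zero.mp (le_antisymm (le_of_le_of_eq (hc k j) h.symm) (norm_nonneg _))
      have : Q = 0 := by
        rw [hQdef]
        refine Finset.sum_eq_zero fun k _ => ?_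
        rw [hg k, Finset.sum_eq_zero (fun j _ => by rw [hM0 k j, zero_mul]), norm_zero,
          Real.zero_rpow (by positivity)]
      linarith
    · exact h
  -- apply Hadamard three lines
  have hmem : (t:ℂ) ∈ Complex.HadamardThreeLines.verticalClosedStrip 0 1 := by
    simp only [Complex.HadamardThreeLines.verticalClosedStrip, Set.mem_preimage,
      Complex.ofReal_re, Set.mem_Icc]
    exact ⟨ht0.le, ht1.le⟩
  have h3 := Complex.HadamardThreeLines.norm_le_interp_of_mem_verticalClosedStrip₀₁' F
    hmem hdiff.diffContOnCl hbdd edge0 edge1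
  rw [hFt, Complex.norm_real, Real.norm_of_nonneg hQnn, Complex.ofReal_re] at h3
  -- final algebra via logarithms
  have hsPpos : 0 < Real.sqrt P := Real.sqrt_pos.mpr hPpos
  have hsQpos : 0 < Real.sqrt Q := Real.sqrt_pos.mpr hQpos
  have hXpos : 0 < Real.sqrt P * Real.sqrt Q := mul_pos hsPpos hsQpos
  have hYpos : 0 < c * P * Q := mul_pos (mul_pos hcpos hPpos) hQpos
  have hlog := Real.log_le_log hQpos h3
  rw [Real.log_mul (ne_of_gt (Real.rpow_pos_of_pos hXpos _))
        (ne_of_gt (Real.rpow_pos_of_pos hYpos _)),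
    Real.log_rpow hXpos, Real.log_rpow hYpos,
    Real.log_mul (ne_of_gt hsPpos) (ne_of_gt hsQpos),
    Real.log_sqrt hPnn, Real.log_sqrt hQnn,
    Real.log_mul (ne_of_gt (mul_pos hcpos hPpos)) (ne_of_gt hQpos),
    Real.log_mul (ne_of_gt hcpos) (ne_of_gt hPpos)] at hlog
  rw [← Real.log_le_log_iff (Real.rpow_pos_of_pos hQpos _)
      (mul_pos (Real.rpow_pos_of_pos hcpos _) (Real.rpow_pos_of_pos hPpos _)),
    Real.log_rpow hQpos,
    Real.log_mul (ne_of_gt (Real.rpow_pos_of_pos hcpos _))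
      (ne_of_gt (Real.rpow_pos_of_pos hPpos _)),
    Real.log_rpow hcpos, Real.log_rpow hPpos]
  linarith

end EUPRiesz

section EUPMain
open Finset Real

/-- **Entropic uncertainty principle (Maassen–Uffink).** For a unitary operator `U` on a
finite-dimensional complex inner product space with orthonormal basis `b`, and a unit vector `ψ`,
the entropies of `Uψ` and `ψ` relative to `b` satisfy `h(Uψ) + h(ψ) ≥ -2 log c(U)`, where
`c(U)` is the largest modulus of a matrix entry of `U` in the basis `b`. -/
theorem entropic_uncertainty_principle
    {H : Type*} [NormedAddCommGroup H] [InnerProductSpace ℂ H]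
    {n : ℕ} (b : OrthonormalBasis (Fin n) ℂ H)
    (U : H ≃ₗᵢ[ℂ] H) (ψ : H) (hψ : ‖ψ‖ = 1) :
    (-∑ j : Fin n, ‖⟪U ψ, b j⟫_ℂ‖ ^ 2 * Real.log (‖⟪U ψ, b j⟫_ℂ‖ ^ 2))
      + (-∑ j : Fin n, ‖⟪ψ, b j⟫_ℂ‖ ^ 2 * Real.log (‖⟪ψ, b j⟫_ℂ‖ ^ 2))
      ≥ -2 * Real.log (⨆ j : Fin n, ⨆ k : Fin n, ‖⟪b k, U (b j)⟫_ℂ‖) := by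
  classical
  have parseval : ∀ x : H, ∑ i, ‖⟪b i, x⟫_ℂ‖ ^ (2:ℕ) = ‖x‖ ^ (2:ℕ) := by
    intro x
    have h := b.repr.norm_map x
    rw [EuclideanSpace.norm_eq] at h
    have h2 : (∑ i, ‖b.repr x i‖ ^ (2:ℕ)) = ‖x‖ ^ (2:ℕ) := by
      rw [← h, Real.sq_sqrt (Finset.sum_nonneg fun i _ => sq_nonneg _)]
    simp only [b.repr_apply_apply] at h2
    exact h2
  rcases Nat.eq_zero_or_pos n with hn | hn
  · exfalso
    have h := parseval ψ
    rw [hψ] at h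
    subst hn
    simp at h
  -- notation
  have hinner : ∀ (x : H) (k : Fin n),
      ⟪b k, U x⟫_ℂ = ∑ j, ⟪b k, U (b j)⟫_ℂ * ⟪b j, x⟫_ℂ := by
    intro x k
    conv_lhs => rw [← b.sum_repr' x]
    rw [map_sum, inner_sum]
    refine Finset.sum_congr rfl fun j _ => ?_
    rw [LinearIsometryEquiv.map_smul, inner_smul_right]
    ring
  have hM2 : ∀ v : Fin n → ℂ,
      ∑ k, ‖∑ j, ⟪b k, U (b j)⟫_ℂ * v j‖ ^ (2:ℕ) ≤ ∑ j, ‖v j‖ ^ (2:ℕ) := by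
    intro v
    set x : H := ∑ j, v j • b j with hx
    have hvj : ∀ j, ⟪b j, x⟫_ℂ = v j := fun j => b.orthonormal.inner_right_fintype v j
    have h1 : ∑ k, ‖⟪b k, U x⟫_ℂ‖ ^ (2:ℕ) = ‖U x‖ ^ (2:ℕ) := parseval (U x)
    have h3 : ∑ j, ‖⟪b j, x⟫_ℂ‖ ^ (2:ℕ) = ‖x‖ ^ (2:ℕ) := parseval x
    have hcong : ∀ k, (∑ j, ⟪b k, U (b j)⟫_ℂ * v j) = ⟪b k, U x⟫_ℂ := by
      intro k
      rw [hinner x k]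
      exact Finset.sum_congr rfl fun j _ => by rw [hvj j]
    refine le_of_eq ?_
    calc ∑ k, ‖∑ j, ⟪b k, U (b j)⟫_ℂ * v j‖ ^ (2:ℕ)
        = ∑ k, ‖⟪b k, U x⟫_ℂ‖ ^ (2:ℕ) := by
          exact Finset.sum_congr rfl fun k _ => by rw [hcong k]
      _ = ‖x‖ ^ (2:ℕ) := by rw [h1, U.norm_map]
      _ = ∑ j, ‖v j‖ ^ (2:ℕ) := by
          rw [← h3]
          exact Finset.sum_congr rfl fun j _ => by rw [hvj j]
  set c := ⨆ j : Fin n, ⨆ k : Fin n, ‖⟪b k, U (b j)⟫_ℂ‖ with hcdef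
  have hcM : ∀ k j : Fin n, ‖⟪b k, U (b j)⟫_ℂ‖ ≤ c := by
    intro k j
    refine le_trans
      (le_ciSup (f := fun k : Fin n => ‖⟪b k, U (b j)⟫_ℂ‖)
        (Set.Finite.bddAbove (Set.finite_range _)) k) ?_
    exact le_ciSup (f := fun j : Fin n => ⨆ k : Fin n, ‖⟪b k, U (b j)⟫_ℂ‖)
      (Set.Finite.bddAbove (Set.finite_range _)) j
  have i0 : Fin n := ⟨0, hn⟩
  have hcpos : 0 < c := by
    obtain ⟨k, hk⟩ : ∃ k, ⟪b k, U (b i0)⟫_ℂ ≠ 0 := by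
      by_contra h
      push_neg at h
      have h1 := parseval (U (b i0))
      rw [Finset.sum_eq_zero (fun k _ => by rw [h k, norm_zero]; norm_num)] at h1
      rw [U.norm_map, b.orthonormal.1 i0] at h1
      norm_num at h1
    exact lt_of_lt_of_le (norm_pos_iff.mpr hk) (hcM k i0)
  have hp1 : ∑ j, ‖⟪ψ, b j⟫_ℂ‖ ^ (2:ℕ) = 1 := by
    have := parseval ψ
    simp_rw [← norm_inner_symm ψ] at this
    rw [this, hψ]; norm_num
  have hq1 : ∑ k, ‖⟪U ψ, b k⟫_ℂ‖ ^ (2:ℕ) = 1 := by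
    have := parseval (U ψ)
    simp_rw [← norm_inner_symm (U ψ)] at this
    rw [this, U.norm_map, hψ]; norm_num
  have key : ∀ t : ℝ, 0 < t → t < 1 →
      (∑ k, (‖⟪U ψ, b k⟫_ℂ‖ ^ (2:ℕ)) ^ (1 / (1 - t))) ^ ((1 - t) / 2)
        ≤ c ^ t * (∑ j, (‖⟪ψ, b j⟫_ℂ‖ ^ (2:ℕ)) ^ (1 / (1 + t))) ^ ((1 + t) / 2) := by
    intro t ht0 ht1
    have h1t : (0:ℝ) < 1 - t := by linarith
    have h1t' : (0:ℝ) < 1 + t := by linarith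
    have hr := eup_riesz_step (fun k j => ⟪b k, U (b j)⟫_ℂ) (fun j => ⟪b j, ψ⟫_ℂ)
      (fun k => ⟪b k, U ψ⟫_ℂ) (fun k => hinner ψ k) hM2 hcpos.le hcM ht0 ht1
    have e1 : ∀ x : ℂ, (‖x‖ ^ (2:ℕ)) ^ (1 / (1 - t)) = ‖x‖ ^ (2 / (1 - t)) := by
      intro x
      rw [← Real.rpow_natCast ‖x‖ 2, ← Real.rpow_mul (norm_nonneg _)]
      congr 1
      push_cast
      ring
    have e2 : ∀ x : ℂ, (‖x‖ ^ (2:ℕ)) ^ (1 / (1 + t)) = ‖x‖ ^ (2 / (1 + t)) := by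
      intro x
      rw [← Real.rpow_natCast ‖x‖ 2, ← Real.rpow_mul (norm_nonneg _)]
      congr 1
      push_cast
      ring
    simp_rw [e1, e2]
    simp_rw [norm_inner_symm (U ψ), norm_inner_symm ψ]
    exact hr
  have main := eup_entropy_limit (fun j => ‖⟪ψ, b j⟫_ℂ‖ ^ (2:ℕ))
    (fun k => ‖⟪U ψ, b k⟫_ℂ‖ ^ (2:ℕ)) (fun j => by positivity) (fun k => by positivity)
    hp1 hq1 hcpos key
  exact main

end EUPMain
end

section
/- Let H be a finite-dimensional complex inner product space with orthonormal basis (e_1, \dots, e_n), and for a unit vector ψ define the entropy h(ψ) = −Σ_{j=1}^n |⟨ψ, e_j⟩|² · log |⟨ψ, e_j⟩|² (with the convention 0·log 0 = 0). If U is a unitary operator on H and ψ is a unit vector with Uψ = λψ for some scalar λ, then h(ψ) ≥ −log c(U), where c(U) = max_{1 ≤ j,k ≤ n} |⟨e_k, U e_j⟩|. -/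
open scoped InnerProductSpace

set_option maxHeartbeats 1000000

open Complex Finset Filter Topology Set

namespace EntropicUncertaintyAux

lemma norm_phase_exp (x : ℂ) (hx : x ≠ 0) (r : ℝ) (ζ : ℂ) :
    ‖(x / ‖x‖) * Complex.exp ((1+ζ) * (r:ℂ))‖ = Real.exp ((1+ζ.re) * r) := by
  rw [norm_mul, norm_div, Complex.norm_real, norm_norm,
    div_self (norm_ne_zero_iff.2 hx), one_mul, Complex.norm_exp]
  congr 1
  simp [Complex.add_re, Complex.mul_re]

lemma threeLines {n : ℕ} (M : Fin n → Fin n → ℂ) (c : ℝ) (hc : 0 < c)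
    (hMc : ∀ k j, ‖M k j‖ ≤ c)
    (hM2 : ∀ v : Fin n → ℂ, ∑ k, ‖∑ j, M k j * v j‖ ^ 2 = ∑ j, ‖v j‖ ^ 2)
    {s : ℝ} (hs1 : 1/2 < s) (hs2 : s < 1)
    (v w : Fin n → ℂ)
    (hv : ∑ j, ‖v j‖ ^ (1/s) = 1) (hw : ∑ k, ‖w k‖ ^ (1/s) = 1) :
    ‖∑ k, w k * ∑ j, M k j * v j‖ ≤ c ^ (2*s - 1) := by
  have hs0 : 0 < s := by linarith
  have h2s : (0:ℝ) < 2*s := by linarith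
  -- auxiliary : all coordinates have norm ≤ 1
  have hle1 : ∀ (u : Fin n → ℂ), (∑ j, ‖u j‖ ^ (1/s) = 1) → ∀ j, ‖u j‖ ≤ 1 := by
    intro u hu j
    by_contra hgt
    push_neg at hgt
    have h1 : (1:ℝ) < ‖u j‖ ^ (1/s) :=
      Real.one_lt_rpow_iff_of_pos (lt_trans one_pos hgt) |>.2 (Or.inl ⟨hgt, by positivity⟩)
    have h2 : ‖u j‖ ^ (1/s) ≤ ∑ i, ‖u i‖ ^ (1/s) :=
      Finset.single_le_sum (f := fun i => ‖u i‖ ^ (1/s)) (fun i _ => by positivity) (mem_univ j)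
    rw [hu] at h2; linarith
  have hv1 := hle1 v hv
  have hw1 := hle1 w hw
  set V : Fin n → ℂ → ℂ := fun j ζ =>
    if v j = 0 then 0 else (v j / ‖v j‖) * Complex.exp ((1+ζ) * ((Real.log ‖v j‖ / (2*s) : ℝ) : ℂ)) with hVdef
  set W : Fin n → ℂ → ℂ := fun k ζ =>
    if w k = 0 then 0 else (w k / ‖w k‖) * Complex.exp ((1+ζ) * ((Real.log ‖w k‖ / (2*s) : ℝ) : ℂ)) with hWdef
  set f : ℂ → ℂ := fun ζ =>
    Complex.exp (-(ζ * (Real.log c : ℂ))) * ∑ k, W k ζ * ∑ j, M k j * V j ζ with hfdef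
  -- norm formulas
  have normgen : ∀ (x : ℂ) (ζ : ℂ), 0 < 1 + ζ.re →
      ‖(if x = 0 then (0:ℂ) else (x / ‖x‖) * Complex.exp ((1+ζ) * ((Real.log ‖x‖ / (2*s) : ℝ) : ℂ)))‖
        = ‖x‖ ^ ((1+ζ.re)/(2*s)) := by
    intro x ζ hζ
    by_cases hx : x = 0
    · simp [hx, Real.zero_rpow (by positivity : (1+ζ.re)/(2*s) ≠ 0)]
    · rw [if_neg hx, norm_phase_exp x hx, Real.rpow_def_of_pos (norm_pos_iff.2 hx)]
      congr 1; ring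
  have normV : ∀ (j : Fin n) (ζ : ℂ), 0 < 1 + ζ.re → ‖V j ζ‖ = ‖v j‖ ^ ((1+ζ.re)/(2*s)) :=
    fun j ζ hζ => normgen (v j) ζ hζ
  have normW : ∀ (k : Fin n) (ζ : ℂ), 0 < 1 + ζ.re → ‖W k ζ‖ = ‖w k‖ ^ ((1+ζ.re)/(2*s)) :=
    fun k ζ hζ => normgen (w k) ζ hζ
  have normpre : ∀ ζ : ℂ, ‖Complex.exp (-(ζ * (Real.log c : ℂ)))‖ = Real.exp (-(ζ.re * Real.log c)) := by
    intro ζ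
    rw [Complex.norm_exp]
    congr 1
    simp [Complex.mul_re]
  -- differentiability
  have hdiff : Differentiable ℂ f := by
    apply Differentiable.mul
    · exact Complex.differentiable_exp.comp ((differentiable_id.mul_const _).neg)
    · apply Differentiable.fun_sum
      intro k _
      apply Differentiable.mul
      · by_cases hk : w k = 0
        · simp only [hWdef, hk, if_pos]
          exact differentiable_const 0
        · simp only [hWdef, hk, if_neg, ite_false]
          exact (differentiable_const _).mul
            (Complex.differentiable_exp.comp (((differentiable_const 1).add differentiable_id).mul_const _))
      · apply Differentiable.fun_sum
        intro j _
        by_cases hj : v j = 0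
        · simp only [hVdef, hj, if_pos]
          exact (differentiable_const _).mul (differentiable_const 0)
        · simp only [hVdef, hj, if_neg, ite_false]
          exact (differentiable_const _).mul ((differentiable_const _).mul
            (Complex.differentiable_exp.comp (((differentiable_const 1).add differentiable_id).mul_const _)))
  -- boundedness on closed strip
  have hBdd : BddAbove ((norm ∘ f) '' (Complex.HadamardThreeLines.verticalClosedStrip 0 1)) := by
    refine ⟨Real.exp |Real.log c| * ∑ k, ∑ j, ‖M k j‖, ?_⟩
    rintro y ⟨ζ, hζ, rfl⟩
    have hζre : ζ.re ∈ Set.Icc (0:ℝ) 1 := hζ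
    have hζ0 : 0 < 1 + ζ.re := by linarith [hζre.1]
    simp only [Function.comp_apply, hfdef]
    rw [norm_mul, normpre]
    have h1 : Real.exp (-(ζ.re * Real.log c)) ≤ Real.exp |Real.log c| := by
      apply Real.exp_le_exp.2
      calc -(ζ.re * Real.log c) ≤ |(-(ζ.re * Real.log c))| := le_abs_self _
        _ = |ζ.re| * |Real.log c| := by rw [abs_neg, abs_mul]
        _ ≤ 1 * |Real.log c| := by
            apply mul_le_mul_of_nonneg_right _ (abs_nonneg _)
            rw [_root_.abs_of_nonneg hζre.1]; exact hζre.2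
        _ = |Real.log c| := one_mul _
    have h2 : ‖∑ k, W k ζ * ∑ j, M k j * V j ζ‖ ≤ ∑ k, ∑ j, ‖M k j‖ := by
      refine (norm_sum_le _ _).trans (Finset.sum_le_sum fun k _ => ?_)
      rw [norm_mul]
      calc ‖W k ζ‖ * ‖∑ j, M k j * V j ζ‖
          ≤ 1 * ∑ j, ‖M k j‖ := by
            apply mul_le_mul
            · rw [normW k ζ hζ0]; exact Real.rpow_le_one (norm_nonneg _) (hw1 k) (by positivity)
            · refine (norm_sum_le _ _).trans (Finset.sum_le_sum fun j _ => ?_)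
              rw [norm_mul]
              calc ‖M k j‖ * ‖V j ζ‖ ≤ ‖M k j‖ * 1 := by
                    apply mul_le_mul_of_nonneg_left _ (norm_nonneg _)
                    rw [normV j ζ hζ0]
                    exact Real.rpow_le_one (norm_nonneg _) (hv1 j) (by positivity)
                _ = ‖M k j‖ := mul_one _
            · exact norm_nonneg _
            · exact zero_le_one
        _ = ∑ j, ‖M k j‖ := one_mul _
    exact mul_le_mul h1 h2 (norm_nonneg _) (Real.exp_pos _).le
  -- helper for squaring rpow
  have sq_rpow : ∀ x : ℝ, 0 ≤ x → (x ^ ((1+(0:ℝ))/(2*s)))^2 = x ^ (1/s) := by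
    intro x hx
    rw [← Real.rpow_natCast (x ^ ((1+(0:ℝ))/(2*s))) 2, ← Real.rpow_mul hx]
    congr 1
    push_cast
    field_simp
    norm_num
  -- edge 0 bound
  have edge0 : ∀ ζ ∈ Complex.re ⁻¹' {0}, ‖f ζ‖ ≤ 1 := by
    intro ζ hζ
    have hre : ζ.re = 0 := hζ
    have hζ0 : 0 < 1 + ζ.re := by rw [hre]; norm_num
    simp only [hfdef]
    rw [norm_mul, normpre, hre]
    simp only [zero_mul, neg_zero, Real.exp_zero, one_mul]
    have CS := Finset.sum_mul_sq_le_sq_mul_sq Finset.univ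
      (fun k => ‖W k ζ‖) (fun k => ‖∑ j, M k j * V j ζ‖)
    have hWsq : ∑ k, ‖W k ζ‖^2 = 1 := by
      rw [← hw]
      apply Finset.sum_congr rfl
      intro k _
      rw [normW k ζ hζ0, hre, sq_rpow _ (norm_nonneg _)]
    have hVsq : ∑ k, ‖∑ j, M k j * V j ζ‖^2 = 1 := by
      rw [hM2 (fun j => V j ζ), ← hv]
      apply Finset.sum_congr rfl
      intro j _
      rw [normV j ζ hζ0, hre, sq_rpow _ (norm_nonneg _)]
    rw [hWsq, hVsq, one_mul] at CS
    have hsum_nonneg : (0:ℝ) ≤ ∑ k, ‖W k ζ‖ * ‖∑ j, M k j * V j ζ‖ :=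
      Finset.sum_nonneg fun k _ => mul_nonneg (norm_nonneg _) (norm_nonneg _)
    have hb : ∑ k, ‖W k ζ‖ * ‖∑ j, M k j * V j ζ‖ ≤ 1 := by nlinarith
    calc ‖∑ k, W k ζ * ∑ j, M k j * V j ζ‖ ≤ ∑ k, ‖W k ζ * ∑ j, M k j * V j ζ‖ := norm_sum_le _ _
      _ = ∑ k, ‖W k ζ‖ * ‖∑ j, M k j * V j ζ‖ := by simp [norm_mul]
      _ ≤ 1 := hb
  -- edge 1 bound
  have edge1 : ∀ ζ ∈ Complex.re ⁻¹' {1}, ‖f ζ‖ ≤ 1 := by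
    intro ζ hζ
    have hre : ζ.re = 1 := hζ
    have hζ0 : 0 < 1 + ζ.re := by rw [hre]; norm_num
    have hexp : (1+ζ.re)/(2*s) = 1/s := by rw [hre]; ring
    simp only [hfdef]
    rw [norm_mul, normpre, hre]
    have hpre : Real.exp (-(1 * Real.log c)) = c⁻¹ := by
      rw [one_mul, Real.exp_neg, Real.exp_log hc]
    rw [hpre]
    have hsum : ‖∑ k, W k ζ * ∑ j, M k j * V j ζ‖ ≤ c := by
      calc ‖∑ k, W k ζ * ∑ j, M k j * V j ζ‖ ≤ ∑ k, ‖W k ζ‖ * ‖∑ j, M k j * V j ζ‖ := by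
            refine (norm_sum_le _ _).trans (le_of_eq ?_); simp [norm_mul]
        _ ≤ ∑ k, ‖w k‖^(1/s) * c := by
            apply Finset.sum_le_sum
            intro k _
            rw [normW k ζ hζ0, hexp]
            apply mul_le_mul_of_nonneg_left _ (Real.rpow_nonneg (norm_nonneg _) _)
            calc ‖∑ j, M k j * V j ζ‖ ≤ ∑ j, ‖M k j‖ * ‖V j ζ‖ := by
                  refine (norm_sum_le _ _).trans (le_of_eq ?_); simp [norm_mul]
              _ ≤ ∑ j, c * ‖v j‖^(1/s) := by
                  apply Finset.sum_le_sum
                  intro j _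
                  rw [normV j ζ hζ0, hexp]
                  exact mul_le_mul_of_nonneg_right (hMc k j) (Real.rpow_nonneg (norm_nonneg _) _)
              _ = c := by rw [← Finset.mul_sum, hv, mul_one]
        _ = c := by rw [← Finset.sum_mul, hw, one_mul]
    calc c⁻¹ * ‖∑ k, W k ζ * ∑ j, M k j * V j ζ‖ ≤ c⁻¹ * c :=
          mul_le_mul_of_nonneg_left hsum (by positivity)
      _ = 1 := inv_mul_cancel₀ hc.ne'
  -- apply Hadamard three lines
  set ζ₀ : ℂ := ((2*s-1 : ℝ) : ℂ) with hζ₀def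
  have hζ₀mem : ζ₀ ∈ Complex.HadamardThreeLines.verticalClosedStrip 0 1 := by
    simp only [Complex.HadamardThreeLines.verticalClosedStrip, Set.mem_preimage, hζ₀def,
      Complex.ofReal_re, Set.mem_Icc]
    constructor <;> linarith
  have key := Complex.HadamardThreeLines.norm_le_interp_of_mem_verticalClosedStrip₀₁' f
    hζ₀mem hdiff.diffContOnCl hBdd edge0 edge1
  rw [Real.one_rpow, Real.one_rpow, mul_one] at key
  -- evaluate f at ζ₀
  have hVeval : ∀ j, V j ζ₀ = v j := by
    intro j
    by_cases hj : v j = 0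
    · simp [hVdef, hj]
    · simp only [hVdef, hj, ite_false]
      have h1 : ((1:ℂ)+ζ₀) = ((2*s : ℝ) : ℂ) := by rw [hζ₀def]; push_cast; ring
      rw [h1, ← Complex.ofReal_mul]
      have h2 : 2*s * (Real.log ‖v j‖ / (2*s)) = Real.log ‖v j‖ := by field_simp
      rw [h2, ← Complex.ofReal_exp, Real.exp_log (norm_pos_iff.2 hj)]
      exact div_mul_cancel₀ _ (by simpa using norm_ne_zero_iff.2 hj)
  have hWeval : ∀ k, W k ζ₀ = w k := by
    intro k
    by_cases hk : w k = 0
    · simp [hWdef, hk]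
    · simp only [hWdef, hk, ite_false]
      have h1 : ((1:ℂ)+ζ₀) = ((2*s : ℝ) : ℂ) := by rw [hζ₀def]; push_cast; ring
      rw [h1, ← Complex.ofReal_mul]
      have h2 : 2*s * (Real.log ‖w k‖ / (2*s)) = Real.log ‖w k‖ := by field_simp
      rw [h2, ← Complex.ofReal_exp, Real.exp_log (norm_pos_iff.2 hk)]
      exact div_mul_cancel₀ _ (by simpa using norm_ne_zero_iff.2 hk)
  have hfeval : ‖f ζ₀‖ = c ^ (-(2*s-1)) * ‖∑ k, w k * ∑ j, M k j * v j‖ := by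
    simp only [hfdef]
    rw [norm_mul, normpre]
    congr 1
    · rw [hζ₀def, Complex.ofReal_re, Real.rpow_def_of_pos hc]
      congr 1; ring
    · congr 1
      apply Finset.sum_congr rfl
      intro k _
      rw [hWeval k]
      congr 1
      apply Finset.sum_congr rfl
      intro j _
      rw [hVeval j]
  rw [hfeval, Real.rpow_neg hc.le] at key
  have hpos : (0:ℝ) < c ^ (2*s-1) := Real.rpow_pos_of_pos hc _
  calc ‖∑ k, w k * ∑ j, M k j * v j‖
      = c ^ (2*s-1) * ((c ^ (2*s-1))⁻¹ * ‖∑ k, w k * ∑ j, M k j * v j‖) := by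
        field_simp
    _ ≤ c ^ (2*s-1) * 1 := mul_le_mul_of_nonneg_left key hpos.le
    _ = c ^ (2*s-1) := mul_one _

lemma normsq_basis {H : Type*} [NormedAddCommGroup H] [InnerProductSpace ℂ H]
    {n : ℕ} (b : OrthonormalBasis (Fin n) ℂ H) (x : H) :
    ∑ j : Fin n, ‖⟪b j, x⟫_ℂ‖^2 = ‖x‖^2 := by
  have h := b.repr.norm_map x
  rw [EuclideanSpace.norm_eq] at h
  have h3 : ∑ j : Fin n, ‖⟪b j, x⟫_ℂ‖^2 = ∑ j : Fin n, ‖b.repr x j‖^2 :=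
    Finset.sum_congr rfl (fun j _ => by rw [b.repr_apply_apply x j])
  rw [h3, ← h, Real.sq_sqrt (Finset.sum_nonneg fun i _ => sq_nonneg _)]

lemma stepB {n : ℕ} (M : Fin n → Fin n → ℂ) (c : ℝ) (hc : 0 < c)
    (hMc : ∀ k j, ‖M k j‖ ≤ c)
    (hM2 : ∀ v : Fin n → ℂ, ∑ k, ‖∑ j, M k j * v j‖ ^ 2 = ∑ j, ‖v j‖ ^ 2)
    (a : Fin n → ℂ) (lam : ℂ) (hlam : ‖lam‖ = 1)
    (hev : ∀ k, ∑ j, M k j * a j = lam * a k)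
    (j₀ : Fin n) (hj₀ : a j₀ ≠ 0)
    {s : ℝ} (hs1 : 1/2 < s) (hs2 : s < 1) :
    (1-s) * Real.log (∑ k, ‖a k‖ ^ (1/(1-s))) ≤
      (2*s-1) * Real.log c + s * Real.log (∑ j, ‖a j‖ ^ (1/s)) := by
  have hs0 : 0 < s := by linarith
  have hs1' : 0 < 1 - s := by linarith
  set q : ℝ := 1/(1-s) with hq
  set A : ℝ := ∑ j, ‖a j‖ ^ (1/s) with hA
  set B : ℝ := ∑ k, ‖a k‖ ^ q with hB
  have hApos : 0 < A := by
    apply Finset.sum_pos' (fun j _ => by positivity)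
    exact ⟨j₀, mem_univ _, Real.rpow_pos_of_pos (norm_pos_iff.2 hj₀) _⟩
  have hBpos : 0 < B := by
    apply Finset.sum_pos' (fun j _ => by positivity)
    refine ⟨j₀, mem_univ _, Real.rpow_pos_of_pos (norm_pos_iff.2 hj₀) _⟩
  set v : Fin n → ℂ := fun j => ((A ^ (-s) : ℝ) : ℂ) * a j with hvdef
  set w : Fin n → ℂ := fun k =>
    (starRingEnd ℂ) (a k) * ((‖a k‖ ^ (q - 2) : ℝ) : ℂ) * ((B ^ (-s) : ℝ) : ℂ) with hwdef
  have hnormv : ∀ j, ‖v j‖ = A ^ (-s) * ‖a j‖ := by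
    intro j
    rw [hvdef]
    simp only [norm_mul, Complex.norm_real, Real.norm_eq_abs,
      abs_of_pos (Real.rpow_pos_of_pos hApos _)]
  have hnormw : ∀ k, ‖w k‖ = ‖a k‖ ^ (q-1) * B ^ (-s) := by
    intro k
    by_cases hk : a k = 0
    · have : q - 1 ≠ 0 := by
        have : 1 < q := by rw [hq]; rw [lt_div_iff₀ hs1']; linarith
        linarith
      simp [hwdef, hk, Real.zero_rpow this]
    · rw [hwdef]
      simp only [norm_mul, RCLike.norm_conj, Complex.norm_real, Real.norm_eq_abs,
        abs_of_pos (Real.rpow_pos_of_pos (norm_pos_iff.2 hk) (q-2)),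
        abs_of_pos (Real.rpow_pos_of_pos hBpos _)]
      congr 1
      have hpos := norm_pos_iff.2 hk
      calc ‖a k‖ * ‖a k‖^(q-2) = ‖a k‖^(1:ℝ) * ‖a k‖^(q-2) := by rw [Real.rpow_one]
        _ = ‖a k‖^(1+(q-2)) := (Real.rpow_add hpos 1 (q-2)).symm
        _ = ‖a k‖^(q-1) := by ring_nf
  have hq0 : q ≠ 0 := by positivity
  have hvnorm1 : ∑ j, ‖v j‖ ^ (1/s) = 1 := by
    have : ∀ j, ‖v j‖ ^ (1/s) = A⁻¹ * ‖a j‖ ^ (1/s) := by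
      intro j
      rw [hnormv j, Real.mul_rpow (by positivity) (norm_nonneg _),
        ← Real.rpow_mul hApos.le]
      have e2 : -s * (1/s) = -1 := by field_simp
      rw [e2, Real.rpow_neg_one]
    rw [Finset.sum_congr rfl (fun j _ => this j), ← Finset.mul_sum, ← hA,
      inv_mul_cancel₀ hApos.ne']
  have hwnorm1 : ∑ k, ‖w k‖ ^ (1/s) = 1 := by
    have : ∀ k, ‖w k‖ ^ (1/s) = B⁻¹ * ‖a k‖ ^ q := by
      intro k
      rw [hnormw k, Real.mul_rpow (by positivity) (by positivity),
        ← Real.rpow_mul (norm_nonneg _), ← Real.rpow_mul hBpos.le]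
      have e1 : (q-1) * (1/s) = q := by rw [hq]; field_simp; ring
      have e2 : -s * (1/s) = -1 := by field_simp
      rw [e1, e2, Real.rpow_neg_one, mul_comm]
    rw [Finset.sum_congr rfl (fun k _ => this k), ← Finset.mul_sum, ← hB,
      inv_mul_cancel₀ hBpos.ne']
  have key := threeLines M c hc hMc hM2 hs1 hs2 v w hvnorm1 hwnorm1
  -- compute the sum
  have h1 : ∀ k, ∑ j, M k j * v j = ((A^(-s) : ℝ):ℂ) * (lam * a k) := by
    intro k
    calc ∑ j, M k j * v j = ((A^(-s):ℝ):ℂ) * ∑ j, M k j * a j := by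
          rw [Finset.mul_sum]
          apply Finset.sum_congr rfl
          intro j _
          rw [hvdef]
          ring
      _ = _ := by rw [hev k]
  have h2 : ∀ k, w k * (lam * a k) = lam * ((‖a k‖^(2:ℝ) * ‖a k‖^(q-2) * B^(-s) : ℝ) : ℂ) := by
    intro k
    have hconj : (starRingEnd ℂ) (a k) * a k = ((‖a k‖^2 : ℝ) : ℂ) := by
      rw [mul_comm, Complex.mul_conj']
      norm_cast
    calc w k * (lam * a k)
        = lam * (((starRingEnd ℂ) (a k) * a k) * ((‖a k‖ ^ (q-2) : ℝ):ℂ) * ((B ^ (-s) : ℝ):ℂ)) := by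
          rw [hwdef]; ring
      _ = lam * (((‖a k‖^2 : ℝ):ℂ) * ((‖a k‖ ^ (q-2) : ℝ):ℂ) * ((B ^ (-s) : ℝ):ℂ)) := by
          rw [hconj]
      _ = lam * ((‖a k‖^(2:ℝ) * ‖a k‖^(q-2) * B^(-s) : ℝ) : ℂ) := by
          rw [Real.rpow_two]
          push_cast
          ring
  have h3 : ∑ k, ‖a k‖^(2:ℝ) * ‖a k‖^(q-2) = B := by
    rw [hB]
    apply Finset.sum_congr rfl
    intro k _
    by_cases hk : a k = 0
    · simp [hk, Real.zero_rpow hq0, Real.zero_rpow (two_ne_zero (α := ℝ))]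
    · rw [← Real.rpow_add (norm_pos_iff.2 hk)]
      norm_num
  have hsum : ∑ k, w k * ∑ j, M k j * v j
      = ((A^(-s):ℝ):ℂ) * lam * ((B * B^(-s) : ℝ) : ℂ) := by
    calc ∑ k, w k * ∑ j, M k j * v j
        = ∑ k, ((A^(-s):ℝ):ℂ) * lam * ((‖a k‖^(2:ℝ) * ‖a k‖^(q-2) * B^(-s) : ℝ) : ℂ) := by
          apply Finset.sum_congr rfl
          intro k _
          rw [h1 k, show w k * (((A^(-s):ℝ):ℂ) * (lam * a k))
            = ((A^(-s):ℝ):ℂ) * (w k * (lam * a k)) from by ring, h2 k]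
          ring
      _ = ((A^(-s):ℝ):ℂ) * lam * ∑ k, ((‖a k‖^(2:ℝ) * ‖a k‖^(q-2) * B^(-s) : ℝ) : ℂ) := by
          rw [← Finset.mul_sum]
      _ = ((A^(-s):ℝ):ℂ) * lam * ((B * B^(-s) : ℝ) : ℂ) := by
          rw [← Complex.ofReal_sum]
          congr 2
          rw [← Finset.sum_mul, h3]
  rw [hsum] at key
  have hBB : B * B^(-s) = B^(1-s) := by
    calc B * B^(-s) = B^(1:ℝ) * B^(-s) := by rw [Real.rpow_one]
      _ = B^(1-s) := by rw [← Real.rpow_add hBpos]; ring_nf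
  rw [norm_mul, norm_mul, Complex.norm_real, Complex.norm_real, hlam, mul_one,
    Real.norm_eq_abs, Real.norm_eq_abs, abs_of_pos (Real.rpow_pos_of_pos hApos _), hBB,
    abs_of_pos (Real.rpow_pos_of_pos hBpos _)] at key
  -- take logs
  have hlog := Real.log_le_log (by positivity) key
  rw [Real.log_mul (by positivity) (by positivity), Real.log_rpow hApos,
    Real.log_rpow hBpos, Real.log_rpow hc] at hlog
  linarith

lemma stepC {n : ℕ} (a : Fin n → ℂ) (c : ℝ) (hc : 0 < c)
    (hsum2 : ∑ j, ‖a j‖^(2:ℝ) = 1)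
    (hineq : ∀ s : ℝ, 1/2 < s → s < 1 →
      (1-s) * Real.log (∑ k, ‖a k‖ ^ (1/(1-s))) ≤
        (2*s-1) * Real.log c + s * Real.log (∑ j, ‖a j‖ ^ (1/s))) :
    -∑ j, ‖a j‖^2 * Real.log (‖a j‖^2) ≥ -Real.log c := by
  set D : ℝ := ∑ j, ‖a j‖^(2:ℝ) * Real.log ‖a j‖ with hD
  set F : ℝ → ℝ := fun s =>
    (1-s) * Real.log (∑ k, ‖a k‖ ^ (1/(1-s))) - s * Real.log (∑ j, ‖a j‖ ^ (1/s)) with hF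
  -- derivative of each summand, first family
  have hterm1 : ∀ j : Fin n, HasDerivAt (fun s : ℝ => ‖a j‖ ^ (1/(1-s)))
      (‖a j‖^(2:ℝ) * Real.log ‖a j‖ * 4) (1/2) := by
    intro j
    by_cases hj : a j = 0
    · have hz : ‖a j‖ = 0 := by simp [hj]
      have heq : (fun s : ℝ => ‖a j‖ ^ (1/(1-s))) =ᶠ[𝓝 (1/2:ℝ)] (fun _ => (0:ℝ)) := by
        filter_upwards [Ioo_mem_nhds (by norm_num : (0:ℝ) < 1/2) (by norm_num : (1/2:ℝ) < 1)]
          with s hs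
        rw [hz, Real.zero_rpow]
        have : 0 < 1 - s := by linarith [hs.2]
        positivity
      have h0 : HasDerivAt (fun _ : ℝ => (0:ℝ)) 0 (1/2) := hasDerivAt_const _ _
      have := h0.congr_of_eventuallyEq heq
      simpa [hz] using this
    · have hpos : 0 < ‖a j‖ := norm_pos_iff.2 hj
      have hinner : HasDerivAt (fun s : ℝ => 1/(1-s)) 4 (1/2) := by
        have h1 : HasDerivAt (fun s : ℝ => 1-s) (-1) (1/2) := by
          simpa using (hasDerivAt_id (1/2:ℝ)).const_sub 1
        have h2 := h1.inv (by norm_num : (1:ℝ)-(1/2) ≠ 0)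
        simp only [one_div]
        convert h2 using 1 <;> norm_num
        all_goals rfl
      have hu : HasDerivAt (fun s : ℝ => Real.log ‖a j‖ * (1/(1-s)))
          (Real.log ‖a j‖ * 4) (1/2) := hinner.const_mul _
      have hexp := hu.exp
      have heq : (fun s : ℝ => ‖a j‖ ^ (1/(1-s)))
          = (fun s : ℝ => Real.exp (Real.log ‖a j‖ * (1/(1-s)))) := by
        funext s
        rw [Real.rpow_def_of_pos hpos]
      rw [heq]
      convert hexp using 1
      rw [Real.rpow_def_of_pos hpos]
      norm_num
      ring
  have hterm2 : ∀ j : Fin n, HasDerivAt (fun s : ℝ => ‖a j‖ ^ (1/s))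
      (-(‖a j‖^(2:ℝ) * Real.log ‖a j‖ * 4)) (1/2) := by
    intro j
    by_cases hj : a j = 0
    · have hz : ‖a j‖ = 0 := by simp [hj]
      have heq : (fun s : ℝ => ‖a j‖ ^ (1/s)) =ᶠ[𝓝 (1/2:ℝ)] (fun _ => (0:ℝ)) := by
        filter_upwards [Ioo_mem_nhds (by norm_num : (0:ℝ) < 1/2) (by norm_num : (1/2:ℝ) < 1)]
          with s hs
        rw [hz, Real.zero_rpow]
        have : 0 < s := hs.1
        positivity
      have h0 : HasDerivAt (fun _ : ℝ => (0:ℝ)) 0 (1/2) := hasDerivAt_const _ _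
      have := h0.congr_of_eventuallyEq heq
      simpa [hz] using this
    · have hpos : 0 < ‖a j‖ := norm_pos_iff.2 hj
      have hinner : HasDerivAt (fun s : ℝ => 1/s) (-4) (1/2) := by
        have h2 := (hasDerivAt_id (1/2:ℝ)).inv (by norm_num : (1/2:ℝ) ≠ 0)
        simp only [one_div]
        convert h2 using 1 <;> norm_num
        all_goals rfl
      have hu : HasDerivAt (fun s : ℝ => Real.log ‖a j‖ * (1/s))
          (Real.log ‖a j‖ * (-4)) (1/2) := hinner.const_mul _
      have hexp := hu.exp
      have heq : (fun s : ℝ => ‖a j‖ ^ (1/s))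
          = (fun s : ℝ => Real.exp (Real.log ‖a j‖ * (1/s))) := by
        funext s
        rw [Real.rpow_def_of_pos hpos]
      rw [heq]
      convert hexp using 1
      rw [Real.rpow_def_of_pos hpos]
      norm_num
      ring
  -- sums
  have e2 : (1:ℝ)/(1-(1/2:ℝ)) = 2 := by norm_num
  have e2' : (1:ℝ)/(1/2:ℝ) = 2 := by norm_num
  have hL1 : HasDerivAt (fun s : ℝ => ∑ k, ‖a k‖ ^ (1/(1-s))) (4*D) (1/2) := by
    have := HasDerivAt.fun_sum (fun j (_ : j ∈ Finset.univ) => hterm1 j)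
    refine this.congr_deriv ?_
    rw [hD, Finset.mul_sum]
    apply Finset.sum_congr rfl
    intro j _
    ring
  have hL2 : HasDerivAt (fun s : ℝ => ∑ j, ‖a j‖ ^ (1/s)) (-(4*D)) (1/2) := by
    have := HasDerivAt.fun_sum (fun j (_ : j ∈ Finset.univ) => hterm2 j)
    refine this.congr_deriv ?_
    rw [hD, Finset.mul_sum, ← Finset.sum_neg_distrib]
    apply Finset.sum_congr rfl
    intro j _
    ring
  have hval1 : ∑ k, ‖a k‖ ^ ((1:ℝ)/(1-(1/2:ℝ))) = 1 := by rw [e2]; exact hsum2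
  have hval2 : ∑ j, ‖a j‖ ^ ((1:ℝ)/(1/2:ℝ)) = 1 := by rw [e2']; exact hsum2
  have hG1 : HasDerivAt (fun s : ℝ => Real.log (∑ k, ‖a k‖ ^ (1/(1-s)))) (4*D) (1/2) := by
    have := hL1.log (by rw [hval1]; exact one_ne_zero)
    convert this using 1
    rw [hval1]
    norm_num
  have hG2 : HasDerivAt (fun s : ℝ => Real.log (∑ j, ‖a j‖ ^ (1/s))) (-(4*D)) (1/2) := by
    have := hL2.log (by rw [hval2]; exact one_ne_zero)
    convert this using 1
    rw [hval2]
    norm_num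
  have hone : HasDerivAt (fun s : ℝ => 1-s) (-1) (1/2:ℝ) := by
    simpa using (hasDerivAt_id (1/2:ℝ)).const_sub 1
  have hid : HasDerivAt (fun s : ℝ => s) 1 (1/2:ℝ) := hasDerivAt_id _
  have hT1 : HasDerivAt (fun s : ℝ => (1-s) * Real.log (∑ k, ‖a k‖ ^ (1/(1-s)))) (2*D) (1/2) := by
    have := hone.mul hG1
    refine this.congr_deriv ?_
    rw [hval1]
    norm_num
    ring
  have hT2 : HasDerivAt (fun s : ℝ => s * Real.log (∑ j, ‖a j‖ ^ (1/s))) (-(2*D)) (1/2) := by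
    have := hid.mul hG2
    refine this.congr_deriv ?_
    rw [hval2]
    norm_num
    ring
  have hFder : HasDerivAt F (4*D) (1/2) := by
    have := hT1.sub hT2
    refine this.congr_deriv ?_
    ring
  have hF0 : F (1/2) = 0 := by
    rw [hF]
    simp only
    rw [hval1, hval2]
    norm_num
  -- slope limit
  rw [hasDerivAt_iff_tendsto_slope] at hFder
  have htend : Tendsto (slope F (1/2)) (𝓝[>] (1/2:ℝ)) (𝓝 (4*D)) :=
    hFder.mono_left (nhdsWithin_mono _ (fun x hx => (ne_of_gt hx)))
  have hle : ∀ᶠ x in 𝓝[>] (1/2:ℝ), slope F (1/2) x ≤ 2 * Real.log c := by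
    filter_upwards [Ioo_mem_nhdsGT_of_mem
      (by norm_num : (1/2:ℝ) ∈ Set.Ico (1/2:ℝ) 1)] with s hs
    have hs1 := hs.1
    have hs2 := hs.2
    rw [slope_def_field, hF0, sub_zero]
    have hpos : 0 < s - 1/2 := by linarith
    rw [div_le_iff₀ hpos]
    have := hineq s hs1 hs2
    have hFs : F s = (1-s) * Real.log (∑ k, ‖a k‖ ^ (1/(1-s)))
        - s * Real.log (∑ j, ‖a j‖ ^ (1/s)) := rfl
    nlinarith [this]
  have hfinal : 4*D ≤ 2*Real.log c := le_of_tendsto htend hle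
  have hsum_eq : ∑ j, ‖a j‖^2 * Real.log (‖a j‖^2) = 2*D := by
    rw [hD, Finset.mul_sum]
    apply Finset.sum_congr rfl
    intro j _
    rw [Real.log_pow]
    rw [show ‖a j‖^(2:ℝ) = ‖a j‖^(2:ℕ) from Real.rpow_two _ ▸ (by norm_num)]
    push_cast
    ring
  rw [ge_iff_le, neg_le_neg_iff, hsum_eq]
  linarith

end EntropicUncertaintyAux

open EntropicUncertaintyAux

/-- **Entropic uncertainty principle for eigenvectors.** If `ψ` is a unit eigenvector of a
unitary operator `U` on a finite-dimensional complex inner product space with orthonormal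
basis `b`, then the entropy of `ψ` relative to `b` is at least `-log c(U)`, where `c(U)` is
the largest modulus of a matrix entry of `U` in the basis `b`. -/
theorem entropic_uncertainty_eigenvector
    {H : Type*} [NormedAddCommGroup H] [InnerProductSpace ℂ H]
    {n : ℕ} (b : OrthonormalBasis (Fin n) ℂ H)
    (U : H ≃ₗᵢ[ℂ] H) (ψ : H) (hψ : ‖ψ‖ = 1) (lam : ℂ) (hev : U ψ = lam • ψ) :
    (-∑ j : Fin n, ‖⟪ψ, b j⟫_ℂ‖ ^ 2 * Real.log (‖⟪ψ, b j⟫_ℂ‖ ^ 2))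
      ≥ -Real.log (⨆ j : Fin n, ⨆ k : Fin n, ‖⟪b k, U (b j)⟫_ℂ‖) := by
  rcases Nat.eq_zero_or_pos n with hn | hn
  · exfalso
    subst hn
    have h0 : ψ = 0 := by
      have := b.sum_repr ψ
      simpa using this.symm
    rw [h0, norm_zero] at hψ
    exact one_ne_zero hψ.symm
  have hne : Nonempty (Fin n) := ⟨⟨0, hn⟩⟩
  set M : Fin n → Fin n → ℂ := fun k j => ⟪b k, U (b j)⟫_ℂ with hM
  set a : Fin n → ℂ := fun j => ⟪b j, ψ⟫_ℂ with ha
  set c : ℝ := ⨆ j : Fin n, ⨆ k : Fin n, ‖⟪b k, U (b j)⟫_ℂ‖ with hcdef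
  -- bounds for iSup
  have hMc : ∀ k j, ‖M k j‖ ≤ c := by
    intro k j
    calc ‖M k j‖ ≤ ⨆ k' : Fin n, ‖⟪b k', U (b j)⟫_ℂ‖ :=
          le_ciSup (f := fun k' : Fin n => ‖⟪b k', U (b j)⟫_ℂ‖)
            (Set.Finite.bddAbove (Set.finite_range _)) k
      _ ≤ c := le_ciSup (f := fun j : Fin n => ⨆ k : Fin n, ‖⟪b k, U (b j)⟫_ℂ‖)
          (Set.Finite.bddAbove (Set.finite_range _)) j
  -- unit vectors, norms
  have hUnorm : ∀ x : H, ‖U x‖ = ‖x‖ := fun x => U.norm_map x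
  -- positivity of c
  have hc : 0 < c := by
    obtain ⟨j⟩ := hne
    have h1 : ∑ k : Fin n, ‖⟪b k, U (b j)⟫_ℂ‖^2 = 1 := by
      rw [normsq_basis b (U (b j)), hUnorm]
      rw [b.orthonormal.1 j, one_pow]
    have h2 : ∃ k, ⟪b k, U (b j)⟫_ℂ ≠ 0 := by
      by_contra hcon
      push_neg at hcon
      have h0 : ∑ k : Fin n, ‖⟪b k, U (b j)⟫_ℂ‖^2 = 0 :=
        Finset.sum_eq_zero (fun k _ => by rw [hcon k]; simp)
      rw [h0] at h1
      exact one_ne_zero h1.symm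
    obtain ⟨k, hk⟩ := h2
    exact lt_of_lt_of_le (norm_pos_iff.2 hk) (hMc k j)
  -- the matrix preserves ℓ² norms
  have hM2 : ∀ v : Fin n → ℂ, ∑ k, ‖∑ j, M k j * v j‖ ^ 2 = ∑ j, ‖v j‖ ^ 2 := by
    intro v
    set x : H := ∑ j, v j • b j with hx
    have hcoef : ∀ k, ∑ j, M k j * v j = ⟪b k, U x⟫_ℂ := by
      intro k
      rw [hx, map_sum]
      rw [inner_sum]
      apply Finset.sum_congr rfl
      intro j _
      rw [LinearIsometryEquiv.map_smul, inner_smul_right]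
      ring
    have h1 : ∑ k, ‖∑ j, M k j * v j‖ ^ 2 = ‖U x‖^2 := by
      rw [Finset.sum_congr rfl (fun k _ => by rw [hcoef k]), normsq_basis]
    have h2 : ∑ j : Fin n, ‖v j‖ ^ 2 = ‖x‖^2 := by
      rw [← normsq_basis b x]
      apply Finset.sum_congr rfl
      intro j _
      rw [hx]
      rw [b.orthonormal.inner_right_fintype v j]
    rw [h1, h2, hUnorm]
  -- eigenvector equation in coordinates
  have hψsum : ∑ j, a j • b j = ψ := by
    rw [ha]
    simpa using b.sum_repr' ψ
  have heva : ∀ k, ∑ j, M k j * a j = lam * a k := by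
    intro k
    have h1 : ∑ j, M k j * a j = ⟪b k, U ψ⟫_ℂ := by
      conv_rhs => rw [← hψsum]
      rw [map_sum, inner_sum]
      apply Finset.sum_congr rfl
      intro j _
      rw [LinearIsometryEquiv.map_smul, inner_smul_right]
      ring
    rw [h1, hev, inner_smul_right]
  -- |lam| = 1
  have hlam : ‖lam‖ = 1 := by
    have := hUnorm ψ
    rw [hev, norm_smul, hψ, mul_one] at this
    rw [this]
  -- sum of squares of coefficients
  have hsum2 : ∑ j, ‖a j‖^(2:ℝ) = 1 := by
    have := normsq_basis b ψ
    rw [hψ, one_pow] at this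
    rw [← this]
    apply Finset.sum_congr rfl
    intro j _
    rw [ha, Real.rpow_two]
  -- a nonzero coordinate
  have hj₀ : ∃ j₀, a j₀ ≠ 0 := by
    by_contra hcon
    push_neg at hcon
    have : ∑ j, ‖a j‖^(2:ℝ) = 0 :=
      Finset.sum_eq_zero (fun j _ => by rw [hcon j]; simp)
    rw [hsum2] at this
    exact one_ne_zero this
  obtain ⟨j₀, hj₀⟩ := hj₀
  -- conclude
  have key := stepC a c hc hsum2 (fun s hs1 hs2 =>
    stepB M c hc hMc hM2 a lam hlam heva j₀ hj₀ hs1 hs2)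
  rw [ge_iff_le]
  calc -Real.log c ≤ -∑ j, ‖a j‖^2 * Real.log (‖a j‖^2) := key
    _ = -∑ j : Fin n, ‖⟪ψ, b j⟫_ℂ‖ ^ 2 * Real.log (‖⟪ψ, b j⟫_ℂ‖ ^ 2) := by
        congr 1
        apply Finset.sum_congr rfl
        intro j _
        rw [ha]
        rw [← norm_inner_symm ψ (b j)]
end

section
/- (Peierls–Bogoliubov inequality.) Let B be an n×n Hermitian complex matrix, let F : ℝ → ℝ be a convex function, and let (φ_1, …, φ_n) be an orthonormal basis of ℂⁿ. Then Σ_{j=1}^n F(⟨B φ_j, φ_j⟩) ≤ Tr F(B), where F(B) is the Hermitian matrix obtained by applying F to the eigenvalues of B in a spectral decomposition (i.e. F(B) = Σ_k F(μ_k) Π_k if B = Σ_k μ_k Π_k with Π_k the orthogonal eigenprojections). -/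
open scoped InnerProductSpace

/-- **Peierls–Bogoliubov inequality.** For an `n × n` Hermitian matrix `B`, a convex function
`F : ℝ → ℝ`, and an orthonormal basis `(φ_j)` of `ℂⁿ`, one has
`Σ_j F(⟨B φ_j, φ_j⟩) ≤ Tr F(B)`, where `Tr F(B) = Σ_k F(μ_k)` summed over the eigenvalues
of `B` (with multiplicity), since `F(B) = Σ_k F(μ_k) Π_k` in a spectral decomposition. -/
theorem peierls_bogoliubov
    {n : ℕ} (B : Matrix (Fin n) (Fin n) ℂ) (hB : B.IsHermitian)
    (F : ℝ → ℝ) (hF : ConvexOn ℝ Set.univ F)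
    (φ : OrthonormalBasis (Fin n) ℂ (EuclideanSpace ℂ (Fin n))) :
    ∑ j : Fin n, F (⟪Matrix.toEuclideanLin B (φ j), φ j⟫_ℂ).re
      ≤ (Matrix.trace (hB.cfc F)).re := by
  set ψ := hB.eigenvectorBasis with hψ
  set μ := hB.eigenvalues with hμ
  set p : Fin n → Fin n → ℝ := fun j i => ‖⟪ψ i, φ j⟫_ℂ‖ ^ 2 with hp
  have hψB : ∀ i, Matrix.toEuclideanLin B (ψ i) = (μ i : ℂ) • ψ i := by
    intro i
    ext k
    have := congrFun (hB.mulVec_eigenvectorBasis i) k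
    simpa [Matrix.toEuclideanLin_apply, Pi.smul_apply] using this
  have hsymm := (Matrix.isHermitian_iff_isSymmetric).mp hB
  have hrepr : ∀ (x : EuclideanSpace ℂ (Fin n)) i,
      ψ.repr (Matrix.toEuclideanLin B x) i = (μ i : ℂ) * ψ.repr x i := by
    intro x i
    rw [ψ.repr_apply_apply, ψ.repr_apply_apply, ← hsymm (ψ i) x, hψB i,
      inner_smul_left, Complex.conj_ofReal]
  have key1 : ∀ j, (⟪Matrix.toEuclideanLin B (φ j), φ j⟫_ℂ).re = ∑ i, p j i • μ i := by
    intro j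
    rw [← ψ.repr.inner_map_map (Matrix.toEuclideanLin B (φ j)) (φ j)]
    rw [PiLp.inner_apply, Complex.re_sum]
    refine Finset.sum_congr rfl fun i _ => ?_
    rw [hrepr, RCLike.inner_apply, map_mul, ψ.repr_apply_apply]
    rw [Complex.conj_ofReal, mul_left_comm, Complex.mul_conj', ← Complex.ofReal_pow,
      ← Complex.ofReal_mul, Complex.ofReal_re, smul_eq_mul, mul_comm]
  have hp0 : ∀ j i, 0 ≤ p j i := fun j i => by positivity
  have hp1 : ∀ j, ∑ i, p j i = 1 := by
    intro j
    have := ψ.sum_inner_mul_inner (φ j) (φ j)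
    rw [inner_self_eq_norm_sq_to_K, φ.orthonormal.1 j] at this
    have h2 : ∀ i, ⟪φ j, ψ i⟫_ℂ * ⟪ψ i, φ j⟫_ℂ = ((p j i : ℝ) : ℂ) := by
      intro i
      rw [← inner_conj_symm (φ j) (ψ i), Complex.conj_mul']
      norm_cast
    rw [Finset.sum_congr rfl fun i _ => h2 i, ← Complex.ofReal_sum] at this
    norm_num at this
    exact_mod_cast this
  have hp2 : ∀ i, ∑ j, p j i = 1 := by
    intro i
    have := φ.sum_inner_mul_inner (ψ i) (ψ i)
    rw [inner_self_eq_norm_sq_to_K, ψ.orthonormal.1 i] at this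
    have h2 : ∀ j, ⟪ψ i, φ j⟫_ℂ * ⟪φ j, ψ i⟫_ℂ = ((p j i : ℝ) : ℂ) := by
      intro j
      rw [← inner_conj_symm (ψ i) (φ j), Complex.conj_mul', norm_inner_symm]
      norm_cast
    rw [Finset.sum_congr rfl fun j _ => h2 j, ← Complex.ofReal_sum] at this
    norm_num at this
    exact_mod_cast this
  have htr : (Matrix.trace (hB.cfc F)).re = ∑ i, F (μ i) := by
    rw [Matrix.IsHermitian.cfc, Unitary.conjStarAlgAut_apply, Matrix.trace_mul_cycle,
      Unitary.star_mul_self_of_mem (SetLike.coe_mem _), one_mul, Matrix.trace_diagonal,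
      Complex.re_sum]
    simp
    rfl
  rw [htr]
  calc ∑ j, F (⟪Matrix.toEuclideanLin B (φ j), φ j⟫_ℂ).re
      ≤ ∑ j, ∑ i, p j i * F (μ i) := by
        refine Finset.sum_le_sum fun j _ => ?_
        rw [key1 j]
        exact hF.map_sum_le (fun i _ => hp0 j i) (hp1 j) (fun i _ => Set.mem_univ _)
    _ = ∑ i, F (μ i) := by
        rw [Finset.sum_comm]
        refine Finset.sum_congr rfl fun i _ => ?_
        rw [← Finset.sum_mul, hp2 i, one_mul]
end

section
/- (Berezin inequality.) Let B be an n×n Hermitian complex matrix, let Π be an n×n orthogonal projection matrix (Π² = Π = Π*), and let F : ℝ → ℝ be a convex function with F(0) = 0. Then Tr F(ΠBΠ) ≤ Tr (Π F(B) Π), where for a Hermitian matrix A with spectral decomposition A = Σ_k μ_k Π_k one sets F(A) = Σ_k F(μ_k) Π_k. -/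
open Matrix Finset Complex

private lemma jensen_aux {ι : Type*} [Fintype ι] {F : ℝ → ℝ}
    (hF : ConvexOn ℝ Set.univ F) (hF0 : F 0 = 0)
    (w x : ι → ℝ) (hw : ∀ i, 0 ≤ w i) (hw1 : ∑ i, w i ≤ 1) :
    F (∑ i, w i * x i) ≤ ∑ i, w i * F (x i) := by
  set t := ∑ i, w i with ht
  rcases eq_or_lt_of_le (Finset.sum_nonneg fun i _ => hw i) with h0 | h0
  · have hz : ∀ i, w i = 0 := fun i =>
      (Finset.sum_eq_zero_iff_of_nonneg (fun i _ => hw i)).mp h0.symm i (Finset.mem_univ i)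
    simp [hz, hF0]
  · have hmap : F (∑ i, (w i / t) * x i) ≤ ∑ i, (w i / t) * F (x i) := by
      have := hF.map_sum_le (t := Finset.univ) (w := fun i => w i / t) (p := x)
        (fun i _ => div_nonneg (hw i) h0.le)
        (by rw [← Finset.sum_div, ← ht]; exact div_self h0.ne')
        (fun i _ => Set.mem_univ _)
      simpa [smul_eq_mul] using this
    have key := hF.2 (Set.mem_univ (∑ i, (w i / t) * x i)) (Set.mem_univ (0 : ℝ))
      h0.le (by linarith : (0:ℝ) ≤ 1 - t) (by ring)
    have e1 : t • (∑ i, (w i / t) * x i) + (1 - t) • (0:ℝ) = ∑ i, w i * x i := by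
      rw [smul_eq_mul, Finset.mul_sum]
      simp only [smul_zero, add_zero]
      exact Finset.sum_congr rfl fun i _ => by field_simp [show t ≠ 0 from h0.ne']
    rw [e1] at key
    calc F (∑ i, w i * x i) ≤ t * F (∑ i, (w i / t) * x i) + (1 - t) * F 0 := key
      _ ≤ t * (∑ i, (w i / t) * F (x i)) + 0 := by
          rw [hF0, mul_zero]
          exact add_le_add_left (mul_le_mul_of_nonneg_left hmap h0.le) 0
      _ = ∑ i, w i * F (x i) := by
          rw [add_zero, Finset.mul_sum]
          exact Finset.sum_congr rfl fun i _ => by field_simp [show t ≠ 0 from h0.ne']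

/-- **Berezin inequality.** For an `n × n` Hermitian matrix `B`, an orthogonal projection
matrix `Π` (i.e. `Π² = Π = Π*`), and a convex function `F : ℝ → ℝ` with `F(0) = 0`, one has
`Tr F(ΠBΠ) ≤ Tr (Π F(B) Π)`, where `F(A)` denotes the matrix obtained by applying `F` to the
eigenvalues of a Hermitian matrix `A` in a spectral decomposition (functional calculus).
(The matrix `ΠBΠ` is again Hermitian — a fact recorded by the hypothesis `hPBP`, which is
automatically satisfied — so that `F(ΠBΠ)` is defined.) -/
theorem berezin_inequality
    {n : ℕ} (B P : Matrix (Fin n) (Fin n) ℂ)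
    (hB : B.IsHermitian) (hP : P.IsHermitian) (hP2 : P * P = P)
    (hPBP : (P * B * P).IsHermitian)
    (F : ℝ → ℝ) (hF : ConvexOn ℝ Set.univ F) (hF0 : F 0 = 0) :
    (Matrix.trace (hPBP.cfc F)).re ≤ (Matrix.trace (P * hB.cfc F * P)).re := by
  classical
  set U : Matrix (Fin n) (Fin n) ℂ :=
    (Matrix.IsHermitian.eigenvectorUnitary hPBP : Matrix (Fin n) (Fin n) ℂ) with hUdef
  set V : Matrix (Fin n) (Fin n) ℂ :=
    (Matrix.IsHermitian.eigenvectorUnitary hB : Matrix (Fin n) (Fin n) ℂ) with hVdef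
  have hU1 : star U * U = 1 := Unitary.coe_star_mul_self _
  have hU2 : U * star U = 1 := Unitary.coe_mul_star_self _
  have hV1 : star V * V = 1 := Unitary.coe_star_mul_self _
  have hV2 : V * star V = 1 := Unitary.coe_mul_star_self _
  set μ : Fin n → ℝ := hPBP.eigenvalues with hμdef
  set lam : Fin n → ℝ := hB.eigenvalues with hlamdef
  set W : Matrix (Fin n) (Fin n) ℂ := star V * P * U with hWdef
  have hPstar : star P = P := hP
  -- generic diagonal entry computations
  have diagEntryRe : ∀ (M : Matrix (Fin n) (Fin n) ℂ) (i : Fin n),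
      ((star M * M) i i).re = ∑ k, Complex.normSq (M k i) := by
    intro M i
    rw [Matrix.mul_apply, Complex.re_sum]
    refine Finset.sum_congr rfl fun k _ => ?_
    simp [Matrix.star_apply, Complex.normSq_apply, Complex.mul_re]
  have hre : ∀ r : ℝ, ((RCLike.ofReal r : ℂ)).re = r := fun r => rfl
  -- eigenvalue identity : diagonal μ = star W * diagonal lam * W
  have hdiag : Matrix.diagonal ((RCLike.ofReal : ℝ → ℂ) ∘ μ) =
      star W * Matrix.diagonal ((RCLike.ofReal : ℝ → ℂ) ∘ lam) * W := by
    rw [← hPBP.conjStarAlgAut_star_eigenvectorUnitary, Unitary.conjStarAlgAut_apply, Unitary.coe_star, star_star, ← hUdef]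
    conv_lhs => rw [hB.spectral_theorem, Unitary.conjStarAlgAut_apply, ← hVdef, ← hlamdef]
    rw [hWdef, Matrix.star_mul, Matrix.star_mul, hPstar, star_star]
    simp only [Matrix.mul_assoc]
  have hmu : ∀ i, μ i = ∑ k, Complex.normSq (W k i) * lam k := by
    intro i
    have h := congrArg (fun M => (M i i).re) hdiag
    simp only [Matrix.diagonal_apply_eq, Function.comp_apply, hre] at h
    rw [h, Matrix.mul_apply, Complex.re_sum]
    refine Finset.sum_congr rfl fun k _ => ?_
    rw [Matrix.mul_diagonal]
    simp only [Matrix.star_apply, Function.comp_apply]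
    have : ((RCLike.ofReal (lam k) : ℂ)) = Complex.ofReal (lam k) := rfl
    rw [this]
    simp [Complex.normSq_apply, Complex.mul_re, Complex.mul_im]
    ring
  -- column sums are at most 1
  have h1P : (1 - P) * (1 - P) = 1 - P := by
    rw [Matrix.sub_mul, Matrix.one_mul, Matrix.mul_sub, Matrix.mul_one, hP2]
    abel
  have hWWcol : star W * W = star (P * U) * (P * U) := by
    rw [hWdef, Matrix.star_mul, Matrix.star_mul, hPstar, star_star, Matrix.star_mul, hPstar]
    simp only [Matrix.mul_assoc]
    rw [← Matrix.mul_assoc V, hV2, Matrix.one_mul]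
  have hsum1 : star (P * U) * (P * U) + star ((1 - P) * U) * ((1 - P) * U) = 1 := by
    have hs1 : star (1 - P) = 1 - P := by rw [star_sub, star_one, hPstar]
    rw [Matrix.star_mul, Matrix.star_mul, hPstar, hs1]
    calc star U * P * (P * U) + star U * (1 - P) * ((1 - P) * U)
        = star U * ((P * P) * U) + star U * (((1 - P) * (1 - P)) * U) := by
          simp only [Matrix.mul_assoc]
      _ = star U * ((P + (1 - P)) * U) := by
          rw [hP2, h1P, ← Matrix.mul_add, ← Matrix.add_mul]
      _ = 1 := by
          have : P + (1 - P) = 1 := by abel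
          rw [this, Matrix.one_mul, hU1]
  have hcol : ∀ i, ∑ k, Complex.normSq (W k i) ≤ 1 := by
    intro i
    have h := congrArg (fun M => (M i i).re) hsum1
    simp only [Matrix.add_apply, Complex.add_re, Matrix.one_apply_eq, Complex.one_re] at h
    rw [← hWWcol] at h
    rw [diagEntryRe] at h
    have hnn : 0 ≤ ((star ((1 - P) * U) * ((1 - P) * U)) i i).re := by
      rw [diagEntryRe]
      exact Finset.sum_nonneg fun k _ => Complex.normSq_nonneg _
    linarith
  -- row sums give the diagonal of star V * P * V
  have hWWrow : W * star W = star V * P * V := by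
    rw [hWdef, Matrix.star_mul, Matrix.star_mul, hPstar, star_star]
    simp only [Matrix.mul_assoc]
    rw [← Matrix.mul_assoc U, hU2, Matrix.one_mul, ← Matrix.mul_assoc P P, hP2]
  have hrow : ∀ k, ((star V * P * V) k k).re = ∑ i, Complex.normSq (W k i) := by
    intro k
    rw [← hWWrow, Matrix.mul_apply, Complex.re_sum]
    refine Finset.sum_congr rfl fun i _ => ?_
    simp [Matrix.star_apply, Complex.normSq_apply, Complex.mul_re]
    try ring
  -- the two traces
  have hLHS : (Matrix.trace (hPBP.cfc F)).re = ∑ i, F (μ i) := by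
    rw [Matrix.IsHermitian.cfc, Unitary.conjStarAlgAut_apply, ← hUdef, ← hμdef, Matrix.trace_mul_cycle]
    rw [hU1, Matrix.one_mul, Matrix.trace_diagonal, Complex.re_sum]
    simp only [Function.comp_apply, hre]
  have hRHS : (Matrix.trace (P * hB.cfc F * P)).re
      = ∑ k, ((star V * P * V) k k).re * F (lam k) := by
    rw [Matrix.IsHermitian.cfc, Unitary.conjStarAlgAut_apply, ← hVdef, ← hlamdef]
    rw [Matrix.trace_mul_cycle, hP2]
    rw [← Matrix.mul_assoc, ← Matrix.mul_assoc]
    rw [Matrix.trace_mul_comm]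
    simp only [← Matrix.mul_assoc]
    rw [Matrix.trace, Complex.re_sum]
    refine Finset.sum_congr rfl fun k _ => ?_
    rw [Matrix.diag_apply, Matrix.mul_diagonal]
    have : ((RCLike.ofReal (F (lam k)) : ℂ)) = Complex.ofReal (F (lam k)) := rfl
    simp only [Function.comp_apply, this, Complex.mul_re, Complex.ofReal_re,
      Complex.ofReal_im, mul_zero, sub_zero]
  rw [hLHS, hRHS]
  calc ∑ i, F (μ i) = ∑ i, F (∑ k, Complex.normSq (W k i) * lam k) := by
        exact Finset.sum_congr rfl fun i _ => by rw [hmu i]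
    _ ≤ ∑ i, ∑ k, Complex.normSq (W k i) * F (lam k) :=
        Finset.sum_le_sum fun i _ =>
          jensen_aux hF hF0 (fun k => Complex.normSq (W k i)) lam
            (fun k => Complex.normSq_nonneg _) (hcol i)
    _ = ∑ k, ∑ i, Complex.normSq (W k i) * F (lam k) := Finset.sum_comm
    _ = ∑ k, ((star V * P * V) k k).re * F (lam k) := by
        refine Finset.sum_congr rfl fun k _ => ?_
        rw [← Finset.sum_mul, ← hrow k]
end

section
/- Let H be an n×n Hermitian complex matrix whose n eigenvalues λ_1, …, λ_n are pairwise distinct, with corresponding orthonormal eigenbasis (φ_1, …, φ_n) of ℂⁿ. Then for every n×n complex matrix A, the time averages converge: lim_{T→∞} (1/(2T)) ∫_{−T}^{T} e^{itH} A e^{−itH} dt = Σ_{j=1}^n ⟨A φ_j, φ_j⟩ · Π_j, where e^{itH} is the matrix exponential and Π_j is the orthogonal projection onto the span of φ_j. -/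
open Filter intervalIntegral
open scoped Matrix


lemma avg_exp_tendsto (μ : ℝ) :
    Tendsto (fun T : ℝ => (1 / (2 * (T : ℂ))) * ∫ t in (-T)..T, Complex.exp (Complex.I * μ * t))
      atTop (nhds (if μ = 0 then (1:ℂ) else 0)) := by
  rcases eq_or_ne μ 0 with h | h
  · rw [if_pos h]
    apply Tendsto.congr' _ tendsto_const_nhds
    filter_upwards [eventually_gt_atTop (0:ℝ)] with T hT
    have hT' : (T:ℂ) ≠ 0 := by exact_mod_cast hT.ne'
    rw [h]
    simp only [Complex.ofReal_zero, mul_zero, zero_mul, Complex.exp_zero]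
    rw [intervalIntegral.integral_const]
    simp only [sub_neg_eq_add, smul_eq_mul, Complex.real_smul, mul_one]
    push_cast
    field_simp
    ring
  · rw [if_neg h]
    have hc : (Complex.I * μ) ≠ 0 := by
      simp [Complex.I_ne_zero, Complex.ofReal_eq_zero, h]
    have hbound : ∀ᶠ T : ℝ in atTop,
        ‖(1 / (2 * (T : ℂ))) * ∫ t in (-T)..T, Complex.exp (Complex.I * μ * t)‖
          ≤ (2 * T)⁻¹ * (2 / |μ|) := by
      filter_upwards [eventually_gt_atTop (0:ℝ)] with T hT
      rw [norm_mul]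
      have h1 : ‖(1 / (2 * (T : ℂ)))‖ = (2 * T)⁻¹ := by
        rw [norm_div, norm_one]
        rw [show (2 * (T:ℂ)) = ((2 * T : ℝ) : ℂ) by push_cast; ring]
        rw [Complex.norm_real, Real.norm_of_nonneg (by linarith)]
        simp [one_div]
      rw [h1]
      gcongr
      have hint : (∫ t in (-T)..T, Complex.exp (Complex.I * μ * t))
          = (Complex.exp (Complex.I * μ * T) - Complex.exp (Complex.I * μ * (-T:ℝ))) / (Complex.I * μ) := by
        exact_mod_cast integral_exp_mul_complex (a := -T) (b := T) hc
      rw [hint, norm_div]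
      have habs : ∀ s : ℝ, ‖Complex.exp (Complex.I * μ * s)‖ = 1 := by
        intro s
        rw [Complex.norm_exp]
        simp [Complex.mul_re, Complex.mul_im]
      have h2 : ‖Complex.exp (Complex.I * μ * T) - Complex.exp (Complex.I * μ * (-T:ℝ))‖ ≤ 2 := by
        calc _ ≤ ‖Complex.exp (Complex.I * μ * T)‖ + ‖Complex.exp (Complex.I * μ * (-T:ℝ))‖ :=
              norm_sub_le _ _
          _ = 2 := by rw [habs T, habs (-T)]; norm_num
      have h3 : ‖Complex.I * (μ:ℂ)‖ = |μ| := by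
        rw [norm_mul, Complex.norm_I, one_mul, Complex.norm_real, Real.norm_eq_abs]
      rw [h3]
      exact div_le_div_of_nonneg_right h2 (abs_pos.mpr h).le |>.trans_eq rfl
    have hg : Tendsto (fun T : ℝ => (2 * T)⁻¹ * (2 / |μ|)) atTop (nhds 0) := by
      have : Tendsto (fun T : ℝ => (2 * T)) atTop atTop :=
        (tendsto_id.const_mul_atTop (by norm_num))
      simpa using (this.inv_tendsto_atTop).mul_const (2 / |μ|)
    exact squeeze_zero_norm' hbound hg

/-- **Time averages of Heisenberg-evolved observables.** Let `H` be an `n × n` Hermitian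
matrix whose eigenvalues `lam 1, …, lam n` are pairwise distinct, with orthonormal eigenbasis
`(φ_1, …, φ_n)` of `ℂⁿ`. Then for every `n × n` complex matrix `A`, the time averages
`(1/(2T)) ∫_{−T}^{T} e^{itH} A e^{−itH} dt` converge (entrywise) as `T → ∞` to
`Σ_j ⟨A φ_j, φ_j⟩ Π_j`, where `Π_j = φ_j φ_j^*` is the orthogonal projection onto the span
of `φ_j`. -/
theorem time_average_matrix_observable
    {n : ℕ} (Hm : Matrix (Fin n) (Fin n) ℂ) (hHm : Hm.IsHermitian)
    (lam : Fin n → ℝ) (hdist : Function.Injective lam)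
    (φ : Fin n → (Fin n → ℂ))
    (hON : ∀ j k : Fin n, star (φ j) ⬝ᵥ φ k = if j = k then 1 else 0)
    (hEig : ∀ j : Fin n, Hm.mulVec (φ j) = (lam j : ℂ) • φ j)
    (A : Matrix (Fin n) (Fin n) ℂ) (i k : Fin n) :
    Tendsto
      (fun T : ℝ =>
        (1 / (2 * (T : ℂ))) *
          ∫ t in (-T)..T,
            (NormedSpace.exp (((t : ℂ) * Complex.I) • Hm) * A *
              NormedSpace.exp ((-((t : ℂ) * Complex.I)) • Hm)) i k)
      atTop
      (nhds ((∑ j : Fin n, (star (φ j) ⬝ᵥ A.mulVec (φ j)) •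
        Matrix.vecMulVec (φ j) (star (φ j))) i k)) := by
  classical
  set U : Matrix (Fin n) (Fin n) ℂ := Matrix.of (fun i j => φ j i) with hUdef
  have hUU : Uᴴ * U = 1 := by
    ext j l
    have := hON j l
    simpa [Matrix.mul_apply, Matrix.conjTranspose_apply, hUdef, Matrix.one_apply,
      dotProduct] using this
  have hU1 : U * Uᴴ = 1 := mul_eq_one_comm.mp hUU
  have hUunit : IsUnit U := ⟨⟨U, Uᴴ, hU1, hUU⟩, rfl⟩
  have hUinv : U⁻¹ = Uᴴ := Matrix.inv_eq_right_inv hU1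
  set D : Matrix (Fin n) (Fin n) ℂ := Matrix.diagonal (fun j => (lam j : ℂ)) with hDdef
  have hHU : Hm = U * D * Uᴴ := by
    have h1 : Hm * U = U * D := by
      ext p j
      have := congrFun (hEig j) p
      simp only [Matrix.mulVec, dotProduct, Pi.smul_apply, smul_eq_mul] at this
      simp [Matrix.mul_apply, Matrix.mul_diagonal, Matrix.diagonal_apply, mul_ite, mul_zero,
        Finset.sum_ite_eq, hUdef, hDdef, this, mul_comm]
    calc Hm = Hm * (U * Uᴴ) := by rw [hU1, mul_one]
      _ = (Hm * U) * Uᴴ := by rw [mul_assoc]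
      _ = U * D * Uᴴ := by rw [h1]
  have hexp : ∀ c : ℂ, NormedSpace.exp (c • Hm)
      = U * Matrix.diagonal (fun j => Complex.exp (c * lam j)) * Uᴴ := by
    intro c
    have h2 : c • Hm = U * Matrix.diagonal (fun j => c * (lam j : ℂ)) * U⁻¹ := by
      rw [hUinv, hHU]
      rw [show (fun j => c * (lam j : ℂ)) = c • (fun j => (lam j : ℂ)) from rfl,
        Matrix.diagonal_smul, ← hDdef]
      rw [← smul_mul_assoc, ← mul_smul_comm]
    rw [h2, Matrix.exp_conj U _ hUunit, Matrix.exp_diagonal, hUinv, Pi.exp_def]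
    simp only [← Complex.exp_eq_exp_ℂ]
  set B : Matrix (Fin n) (Fin n) ℂ := Uᴴ * A * U with hBdef
  -- pointwise form of the integrand
  have hpt : ∀ t : ℝ,
      (NormedSpace.exp (((t : ℂ) * Complex.I) • Hm) * A *
        NormedSpace.exp ((-((t : ℂ) * Complex.I)) • Hm)) i k
      = ∑ j : Fin n, ∑ l : Fin n,
          (U i j * B j l * star (U k l)) * Complex.exp (Complex.I * ((lam j - lam l : ℝ) : ℂ) * t) := by
    intro t
    rw [hexp, hexp]
    have hmat : (U * Matrix.diagonal (fun j => Complex.exp ((t : ℂ) * Complex.I * lam j)) * Uᴴ) * A *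
        (U * Matrix.diagonal (fun j => Complex.exp ((-((t:ℂ) * Complex.I)) * lam j)) * Uᴴ)
        = U * (Matrix.diagonal (fun j => Complex.exp ((t : ℂ) * Complex.I * lam j)) * B *
            Matrix.diagonal (fun j => Complex.exp ((-((t:ℂ) * Complex.I)) * lam j))) * Uᴴ := by
      rw [hBdef]
      simp only [Matrix.mul_assoc]
    have entry : ∀ M : Matrix (Fin n) (Fin n) ℂ,
        (U * M * Uᴴ) i k = ∑ j : Fin n, ∑ l : Fin n, U i j * M j l * star (U k l) := by
      intro M
      simp only [Matrix.mul_apply, Matrix.conjTranspose_apply, Finset.sum_mul]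
      rw [Finset.sum_comm]
    rw [hmat, entry]
    refine Finset.sum_congr rfl fun j _ => Finset.sum_congr rfl fun l _ => ?_
    rw [Matrix.mul_diagonal, Matrix.diagonal_mul]
    have hee : Complex.exp ((t:ℂ) * Complex.I * lam j) *
        Complex.exp (-((t:ℂ) * Complex.I) * lam l)
        = Complex.exp (Complex.I * (((lam j : ℝ) - lam l : ℝ) : ℂ) * t) := by
      rw [← Complex.exp_add]; congr 1; push_cast; ring
    rw [← hee]; ring
  have hcont : ∀ (μ : ℝ), Continuous (fun t : ℝ => Complex.exp (Complex.I * (μ:ℂ) * t)) :=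
    fun μ => Complex.continuous_exp.comp (continuous_const.mul Complex.continuous_ofReal)
  have hfun : ∀ T : ℝ,
      (1 / (2 * (T : ℂ))) *
          ∫ t in (-T)..T,
            (NormedSpace.exp (((t : ℂ) * Complex.I) • Hm) * A *
              NormedSpace.exp ((-((t : ℂ) * Complex.I)) • Hm)) i k
      = ∑ j : Fin n, ∑ l : Fin n, (U i j * B j l * star (U k l)) *
          ((1 / (2 * (T : ℂ))) *
            ∫ t in (-T)..T, Complex.exp (Complex.I * ((lam j - lam l : ℝ) : ℂ) * t)) := by
    intro T
    have h1 : (∫ t in (-T)..T,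
          (NormedSpace.exp (((t : ℂ) * Complex.I) • Hm) * A *
            NormedSpace.exp ((-((t : ℂ) * Complex.I)) • Hm)) i k)
        = ∑ j : Fin n, ∑ l : Fin n, (U i j * B j l * star (U k l)) *
            ∫ t in (-T)..T, Complex.exp (Complex.I * ((lam j - lam l : ℝ) : ℂ) * t) := by
      rw [intervalIntegral.integral_congr (g := fun t : ℝ =>
        ∑ j : Fin n, ∑ l : Fin n, (U i j * B j l * star (U k l)) *
          Complex.exp (Complex.I * ((lam j - lam l : ℝ) : ℂ) * t)) (fun t _ => hpt t)]
      rw [intervalIntegral.integral_finset_sum]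
      · refine Finset.sum_congr rfl fun j _ => ?_
        rw [intervalIntegral.integral_finset_sum]
        · exact Finset.sum_congr rfl fun l _ => intervalIntegral.integral_const_mul _ _
        · exact fun l _ => (continuous_const.mul (hcont _)).intervalIntegrable _ _
      · exact fun j _ =>
          (continuous_finset_sum _ fun l _ =>
            continuous_const.mul (hcont _)).intervalIntegrable _ _
    rw [h1, Finset.mul_sum]
    refine Finset.sum_congr rfl fun j _ => ?_
    rw [Finset.mul_sum]
    exact Finset.sum_congr rfl fun l _ => by ring
  have hlim : Tendsto
      (fun T : ℝ => ∑ j : Fin n, ∑ l : Fin n, (U i j * B j l * star (U k l)) *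
          ((1 / (2 * (T : ℂ))) *
            ∫ t in (-T)..T, Complex.exp (Complex.I * ((lam j - lam l : ℝ) : ℂ) * t)))
      atTop
      (nhds (∑ j : Fin n, ∑ l : Fin n, (U i j * B j l * star (U k l)) *
        (if lam j - lam l = 0 then (1:ℂ) else 0))) := by
    refine tendsto_finset_sum _ fun j _ => tendsto_finset_sum _ fun l _ => ?_
    exact (avg_exp_tendsto (lam j - lam l)).const_mul _
  have hBjj : ∀ j : Fin n, B j j = star (φ j) ⬝ᵥ A.mulVec (φ j) := by
    intro j
    simp only [hBdef, Matrix.mul_apply, Matrix.conjTranspose_apply, dotProduct,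
      Matrix.mulVec, Pi.star_apply, hUdef, Matrix.of_apply, Finset.sum_mul, Finset.mul_sum]
    rw [Finset.sum_comm]
    exact Finset.sum_congr rfl fun p _ => Finset.sum_congr rfl fun q _ => by ring
  have hval : (∑ j : Fin n, ∑ l : Fin n, (U i j * B j l * star (U k l)) *
        (if lam j - lam l = 0 then (1:ℂ) else 0))
      = (∑ j : Fin n, (star (φ j) ⬝ᵥ A.mulVec (φ j)) •
          Matrix.vecMulVec (φ j) (star (φ j))) i k := by
    have hiff : ∀ j l : Fin n, (lam j - lam l = 0) ↔ (l = j) := by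
      intro j l
      rw [sub_eq_zero]
      exact ⟨fun h => (hdist h.symm), fun h => by rw [h]⟩
    rw [Matrix.sum_apply]
    refine Finset.sum_congr rfl fun j _ => ?_
    rw [Finset.sum_congr rfl (fun l _ => by
      rw [if_congr (hiff j l) rfl rfl, mul_ite, mul_one, mul_zero])]
    rw [Finset.sum_ite_eq']
    simp only [Finset.mem_univ, if_pos]
    rw [hBjj j]
    simp only [Matrix.smul_apply, Matrix.vecMulVec_apply, Pi.star_apply, smul_eq_mul,
      hUdef, Matrix.of_apply]
    ring
  rw [← hval]
  exact Tendsto.congr (fun T => (hfun T).symm) hlim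
end
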